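/- arXiv:1011.6465 — 5 statements merged into one kernel-verified Lean document; each statement's English description precedes it below -/
import Mathlib

section
/- Let n ≥ 2 and let i be an integer with 1 ≤ i ≤ n/2. There exists a constant c = c(n) > 0 such that for all real B ≥ 2, the number of tuples t = (t₁,…,tₙ) ∈ ℤⁿ with max_j |t_j| ≤ B for which the polynomial f_t(x) = xⁿ + t₁x^{n−1} + ⋯ + tₙ has a factor of degree i in ℚ[x] (i.e., there exists g ∈ ℚ[x] of degree exactly i dividing f_t) is at most c · B^{n−i} if 2i < n, and at most c · B^{n−i} · log B if 2i = n. -/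
/-!
By Gauss's lemma, a factor of degree `i` of `f_t` over `ℚ` yields a factorization `f_t = G * H`
into monic integer polynomials of degrees `i` and `n - i`. Mahler measure is multiplicative,
`M(f_t) ≤ (n + 1) B`, and each coefficient of an integer polynomial is at most `2 ^ deg` times its
Mahler measure. Sorting the pairs `(G, H)` by the dyadic scale `2 ^ m ≤ M(G) < 2 ^ (m + 1)`, the
coefficients of `G` are `≪ 2 ^ m` and those of `H` are `≪ B / 2 ^ m`, so scale `m` contributes
`≪ (2 ^ m) ^ i (B / 2 ^ m) ^ (n - i) = B ^ (n - i) 2 ^ (-m (n - 2 i))` tuples. Summing over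
`m ≤ log₂ ((n + 1) B)` gives a geometric series when `2 i < n` and `≪ log B` equal terms when
`2 i = n`.
-/

open Polynomial

noncomputable def genericPoly {n : ℕ} (t : Fin n → ℤ) : ℤ[X] :=
  X ^ n + ∑ j : Fin n, C (t j) * X ^ (n - 1 - (j : ℕ))

section genericPoly

variable {n : ℕ} (t : Fin n → ℤ)

theorem degree_genericPoly_tail_lt :
    (∑ j : Fin n, C (t j) * X ^ (n - 1 - (j : ℕ))).degree < (n : WithBot ℕ) := by
  refine (degree_sum_le _ _).trans_lt ((Finset.sup_lt_iff (WithBot.bot_lt_coe n)).2 fun j _ => ?_)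
  exact (degree_C_mul_X_pow_le _ _).trans_lt
    (WithBot.coe_lt_coe.2 (show n - 1 - (j : ℕ) < n by omega))

theorem genericPoly_monic : (genericPoly t).Monic := monic_X_pow_add (degree_genericPoly_tail_lt t)

theorem natDegree_genericPoly : (genericPoly t).natDegree = n := by
  rw [genericPoly, natDegree_add_eq_left_of_degree_lt, natDegree_X_pow]
  simpa using degree_genericPoly_tail_lt t

theorem coeff_genericPoly_rev (j : Fin n) : (genericPoly t).coeff (n - 1 - j) = t j := by
  simp only [genericPoly, coeff_add, coeff_X_pow, finsetSum_coeff, coeff_C_mul]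
  rw [if_neg (by omega), Finset.sum_eq_single j (fun b _ hb => ?_) (by simp)]
  · simp
  · rw [if_neg (by omega), mul_zero]

theorem genericPoly_injective : Function.Injective (genericPoly (n := n)) := fun t t' h => by
  funext j
  rw [← coeff_genericPoly_rev t j, ← coeff_genericPoly_rev t' j, h]

theorem map_genericPoly : (genericPoly t).map (Int.castRingHom ℚ) =
    X ^ n + ∑ j : Fin n, C ((t j : ℚ)) * X ^ (n - 1 - (j : ℕ)) := by
  simp [genericPoly, Polynomial.map_sum]

theorem abs_coeff_genericPoly_le {B : ℝ} (hB : 1 ≤ B) (ht : ∀ j, (|t j| : ℝ) ≤ B) (k : ℕ) :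
    |((genericPoly t).coeff k : ℝ)| ≤ B := by
  rcases lt_trichotomy k n with hk | hk | hk
  · obtain ⟨j, rfl⟩ : ∃ j : Fin n, n - 1 - (j : ℕ) = k :=
      ⟨⟨n - 1 - k, by omega⟩, show n - 1 - (n - 1 - k) = k by omega⟩
    rw [coeff_genericPoly_rev]
    exact ht j
  · have := (genericPoly_monic t).coeff_natDegree
    rw [natDegree_genericPoly] at this
    simpa [hk, this] using hB
  · rw [coeff_eq_zero_of_natDegree_lt (by rwa [natDegree_genericPoly])]
    simpa using zero_le_one.trans hB

end genericPoly

theorem Polynomial.Monic.exists_monic_factor_of_dvd_map {f : ℤ[X]} (hf : f.Monic) {g : ℚ[X]}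
    (hg : g ∣ f.map (Int.castRingHom ℚ)) :
    ∃ G H : ℤ[X], G.Monic ∧ H.Monic ∧ G.natDegree = g.natDegree ∧ G * H = f := by
  have hinj : Function.Injective (Int.castRingHom ℚ) := (Int.castRingHom ℚ).injective_int
  have hg0 : g ≠ 0 := by
    rintro rfl
    exact (hf.map _).ne_zero (zero_dvd_iff.1 hg)
  have hlc : g.leadingCoeff⁻¹ ≠ 0 := inv_ne_zero (leadingCoeff_ne_zero.2 hg0)
  obtain ⟨G, hG⟩ := IsIntegrallyClosed.eq_map_mul_C_of_dvd ℚ hf hg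
  replace hG : G.map (Int.castRingHom ℚ) * C g.leadingCoeff = g := hG
  have hGg : G.map (Int.castRingHom ℚ) = g * C g.leadingCoeff⁻¹ := by
    calc G.map (Int.castRingHom ℚ)
        = G.map (Int.castRingHom ℚ) * C g.leadingCoeff * C g.leadingCoeff⁻¹ := by
          rw [mul_assoc, ← C_mul, mul_inv_cancel₀ (leadingCoeff_ne_zero.2 hg0), C_1, mul_one]
      _ = g * C g.leadingCoeff⁻¹ := by rw [hG]
  have hGmonic : G.Monic := monic_of_injective hinj (hGg ▸ monic_mul_leadingCoeff_inv hg0)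
  obtain ⟨H, rfl⟩ : G ∣ f :=
    (map_dvd_map _ hinj hGmonic).1 (dvd_trans ⟨C g.leadingCoeff, hG.symm⟩ hg)
  refine ⟨G, H, hGmonic, hGmonic.of_mul_monic_left hf, ?_, rfl⟩
  rw [← natDegree_map_eq_of_injective hinj, hGg, natDegree_mul_C hlc]

theorem Polynomial.abs_coeff_le_two_pow_mul_mapMahlerMeasure (p : ℤ[X]) (k : ℕ) :
    |(p.coeff k : ℝ)| ≤ 2 ^ p.natDegree * p.mapMahlerMeasure (Int.castRingHom ℂ) := by
  have h :=
    norm_coeff_le_choose_mul_mapMahlerMeasure (Int.castRingHom ℂ) Complex.isometry_intCast k p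
  rw [Int.norm_eq_abs] at h
  refine h.trans (mul_le_mul_of_nonneg_right ?_ (mapMahlerMeasure_nonneg _ _))
  exact_mod_cast Nat.choose_le_two_pow _ _

theorem Polynomial.mapMahlerMeasure_le_of_abs_coeff_le (p : ℤ[X]) {R : ℝ}
    (h : ∀ k, |(p.coeff k : ℝ)| ≤ R) :
    p.mapMahlerMeasure (Int.castRingHom ℂ) ≤ (p.natDegree + 1) * R := by
  have hR : 0 ≤ R := (abs_nonneg _).trans (h 0)
  calc p.mapMahlerMeasure (Int.castRingHom ℂ) ≤ ∑ k ∈ p.support, ‖p.coeff k‖ :=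
        mapMahlerMeasure_le_sum_norm_coeff _ (Int.castRingHom ℂ) Complex.isometry_intCast
    _ ≤ p.support.card * R := by
        simpa using Finset.sum_le_card_nsmul _ _ R fun k _ => (Int.norm_eq_abs _).trans_le (h k)
    _ ≤ (p.natDegree + 1) * R := by
        gcongr
        exact_mod_cast card_supp_le_succ_natDegree p

theorem pow_log_floor_le {b : ℕ} {x : ℝ} (hx : 1 ≤ x) : (b : ℝ) ^ Nat.log b ⌊x⌋₊ ≤ x := by
  have h := Nat.pow_log_le_self b (Nat.floor_pos.2 hx).ne'
  calc (b : ℝ) ^ Nat.log b ⌊x⌋₊ ≤ ⌊x⌋₊ := by exact_mod_cast h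
    _ ≤ x := Nat.floor_le (by linarith)

theorem lt_pow_succ_log_floor {b : ℕ} (hb : 1 < b) (x : ℝ) :
    x < (b : ℝ) ^ (Nat.log b ⌊x⌋₊ + 1) := by
  have h := Nat.lt_pow_succ_log_self hb ⌊x⌋₊
  calc x < ⌊x⌋₊ + 1 := Nat.lt_floor_add_one x
    _ ≤ (b : ℝ) ^ (Nat.log b ⌊x⌋₊ + 1) := by exact_mod_cast h

theorem Polynomial.exists_dyadic_coeff_bounds {G H : ℤ[X]} (hG : G ≠ 0) (hH : H ≠ 0)
    {Q : ℝ} (hQ : (G * H).mapMahlerMeasure (Int.castRingHom ℂ) ≤ Q) :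
    ∃ m ≤ Nat.log 2 ⌊Q⌋₊, (∀ k, |(G.coeff k : ℝ)| ≤ 2 ^ (G.natDegree + 1) * 2 ^ m) ∧
      ∀ k, |(H.coeff k : ℝ)| ≤ 2 ^ H.natDegree * Q / 2 ^ m := by
  set a := G.mapMahlerMeasure (Int.castRingHom ℂ)
  set b := H.mapMahlerMeasure (Int.castRingHom ℂ)
  have ha : 1 ≤ a := one_le_mahlerMeasure_of_ne_zero hG
  have hb : 1 ≤ b := one_le_mahlerMeasure_of_ne_zero hH
  have hab : a * b ≤ Q := by rwa [mapMahlerMeasure_mul] at hQ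
  have hlow : (2 : ℝ) ^ Nat.log 2 ⌊a⌋₊ ≤ a := by exact_mod_cast pow_log_floor_le (b := 2) ha
  have hhigh : a < (2 : ℝ) ^ (Nat.log 2 ⌊a⌋₊ + 1) := by
    exact_mod_cast lt_pow_succ_log_floor one_lt_two a
  refine ⟨Nat.log 2 ⌊a⌋₊, Nat.log_mono_right (Nat.floor_le_floor (by nlinarith)),
    fun k => ?_, fun k => ?_⟩
  · calc |(G.coeff k : ℝ)| ≤ 2 ^ G.natDegree * a := G.abs_coeff_le_two_pow_mul_mapMahlerMeasure k
      _ ≤ 2 ^ (G.natDegree + 1) * 2 ^ Nat.log 2 ⌊a⌋₊ := by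
        rw [pow_succ, mul_assoc, ← pow_succ']
        gcongr
  · calc |(H.coeff k : ℝ)| ≤ 2 ^ H.natDegree * b := H.abs_coeff_le_two_pow_mul_mapMahlerMeasure k
      _ ≤ 2 ^ H.natDegree * Q / 2 ^ Nat.log 2 ⌊a⌋₊ := by
        rw [mul_div_assoc]
        gcongr
        rw [le_div_iff₀ (by positivity)]
        nlinarith

noncomputable def monicBox (d : ℕ) (R : ℝ) : Finset ℤ[X] :=
  (Fintype.piFinset fun _ : Fin d => Finset.Icc (-⌊R⌋) ⌊R⌋).image
    fun c => X ^ d + ∑ k : Fin d, C (c k) * X ^ (k : ℕ)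

theorem Polynomial.Monic.mem_monicBox {p : ℤ[X]} (hp : p.Monic) {R : ℝ}
    (h : ∀ k, |(p.coeff k : ℝ)| ≤ R) : p ∈ monicBox p.natDegree R := by
  refine Finset.mem_image.2 ⟨fun k => p.coeff k, Fintype.mem_piFinset.2 fun k => ?_, ?_⟩
  · rw [Finset.mem_Icc, ← abs_le, Int.le_floor]
    exact_mod_cast h k
  · rw [Fin.sum_univ_eq_sum_range (fun k => C (p.coeff k) * X ^ k), ← hp.as_sum]

theorem card_monicBox_le (d : ℕ) {R : ℝ} (hR : 0 ≤ R) :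
    ((monicBox d R).card : ℝ) ≤ (2 * R + 1) ^ d := by
  calc ((monicBox d R).card : ℝ)
      ≤ (Fintype.piFinset fun _ : Fin d => Finset.Icc (-⌊R⌋) ⌊R⌋).card := by
        exact_mod_cast Finset.card_image_le
    _ = (2 * ⌊R⌋ + 1 : ℤ) ^ d := by
        have hfloor : 0 ≤ ⌊R⌋ := Int.floor_nonneg.2 hR
        simp only [Fintype.card_piFinset, Int.card_Icc, Finset.prod_const, Finset.card_univ,
          Fintype.card_fin, Nat.cast_pow]
        rw [← Int.cast_natCast, Int.toNat_of_nonneg (by omega)]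
        push_cast; ring
    _ ≤ (2 * R + 1) ^ d := by
        gcongr
        push_cast
        linarith [Int.floor_le R]

theorem card_monicBox_mul_card_monicBox_le (i d : ℕ) {x Q : ℝ} (hx : 1 ≤ x) (hxQ : x ≤ Q) :
    ((monicBox i (2 ^ (i + 1) * x)).card * (monicBox d (2 ^ d * Q / x)).card : ℝ) ≤
      (3 * 2 ^ (i + 1)) ^ i * (3 * 2 ^ d) ^ d * (x ^ i * (Q / x) ^ d) := by
  have hR₁ : 1 ≤ (2 : ℝ) ^ (i + 1) * x :=
    one_le_mul_of_one_le_of_one_le (one_le_pow₀ one_le_two) hx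
  have hR₂ : 1 ≤ (2 : ℝ) ^ d * Q / x := by
    rw [mul_div_assoc]
    exact one_le_mul_of_one_le_of_one_le (one_le_pow₀ one_le_two)
      ((one_le_div (by linarith)).2 hxQ)
  calc ((monicBox i (2 ^ (i + 1) * x)).card * (monicBox d (2 ^ d * Q / x)).card : ℝ)
      ≤ (2 * (2 ^ (i + 1) * x) + 1) ^ i * (2 * (2 ^ d * Q / x) + 1) ^ d := by
        gcongr
        · exact card_monicBox_le i (by linarith)
        · exact card_monicBox_le d (by linarith)
    _ ≤ (3 * (2 ^ (i + 1) * x)) ^ i * (3 * (2 ^ d * Q / x)) ^ d := by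
        gcongr <;> linarith
    _ = (3 * 2 ^ (i + 1)) ^ i * (3 * 2 ^ d) ^ d * (x ^ i * (Q / x) ^ d) := by
        rw [mul_div_assoc]; ring

def factorBox (n i : ℕ) (B : ℝ) : Set (Fin n → ℤ) :=
  {t | (∀ j, (|t j| : ℝ) ≤ B) ∧ ∃ g : ℚ[X], g.degree = (i : ℕ) ∧
    g ∣ (X : ℚ[X]) ^ n + ∑ j : Fin n, C ((t j : ℚ)) * X ^ (n - 1 - (j : ℕ))}

theorem exists_factorization_of_mem_factorBox {n i : ℕ} {B : ℝ} {t : Fin n → ℤ}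
    (ht : t ∈ factorBox n i B) : ∃ G H : ℤ[X], G.Monic ∧ H.Monic ∧
      G.natDegree = i ∧ H.natDegree = n - i ∧ G * H = genericPoly t := by
  obtain ⟨-, g, hdeg, hdvd⟩ := ht
  rw [← map_genericPoly] at hdvd
  obtain ⟨G, H, hG, hH, hGdeg, hGH⟩ := (genericPoly_monic t).exists_monic_factor_of_dvd_map hdvd
  rw [natDegree_eq_of_degree_eq_some hdeg] at hGdeg
  have hn := natDegree_genericPoly t
  rw [← hGH, natDegree_mul hG.ne_zero hH.ne_zero, hGdeg] at hn
  exact ⟨G, H, hG, hH, hGdeg, by omega, hGH⟩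

theorem ncard_factorBox_le_sum_card (n i : ℕ) {B : ℝ} (hB : 1 ≤ B) :
    (factorBox n i B).ncard ≤ ∑ m ∈ Finset.range (Nat.log 2 ⌊(n + 1) * B⌋₊ + 1),
      (monicBox i (2 ^ (i + 1) * 2 ^ m)).card *
        (monicBox (n - i) (2 ^ (n - i) * ((n + 1) * B) / 2 ^ m)).card := by
  classical
  set Q : ℝ := (n + 1) * B
  let U := (Finset.range (Nat.log 2 ⌊Q⌋₊ + 1)).biUnion fun m =>
    Finset.image₂ (· * ·) (monicBox i (2 ^ (i + 1) * 2 ^ m))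
      (monicBox (n - i) (2 ^ (n - i) * Q / 2 ^ m))
  have hmaps : ∀ t ∈ factorBox n i B, genericPoly t ∈ (U : Set ℤ[X]) := by
    intro t ht
    obtain ⟨G, H, hG, hH, hGdeg, hHdeg, hGH⟩ := exists_factorization_of_mem_factorBox ht
    have hQ : (G * H).mapMahlerMeasure (Int.castRingHom ℂ) ≤ Q := by
      rw [hGH]
      simpa [natDegree_genericPoly] using (genericPoly t).mapMahlerMeasure_le_of_abs_coeff_le
        (abs_coeff_genericPoly_le t hB ht.1)
    obtain ⟨m, hm, hGbound, hHbound⟩ := exists_dyadic_coeff_bounds hG.ne_zero hH.ne_zero hQ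
    rw [Finset.mem_coe, Finset.mem_biUnion]
    refine ⟨m, Finset.mem_range.2 (Nat.lt_succ_of_le hm), Finset.mem_image₂.2 ⟨G, ?_, H, ?_, hGH⟩⟩
    · simpa [hGdeg] using hG.mem_monicBox hGbound
    · simpa [hHdeg] using hH.mem_monicBox hHbound
  calc (factorBox n i B).ncard ≤ (U : Set ℤ[X]).ncard :=
        Set.ncard_le_ncard_of_injOn _ hmaps genericPoly_injective.injOn
    _ = U.card := Set.ncard_coe_finset U
    _ ≤ _ := Finset.card_biUnion_le.trans
        (Finset.sum_le_sum fun m _ => Finset.card_image₂_le _ _ _)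

theorem sum_pow_mul_div_pow_le_of_lt {i d : ℕ} (h : i < d) {Q : ℝ} (hQ : 0 ≤ Q) (M : ℕ) :
    ∑ m ∈ Finset.range M, ((2 : ℝ) ^ m) ^ i * (Q / 2 ^ m) ^ d ≤ 2 * Q ^ d := by
  have hterm : ∀ m, ((2 : ℝ) ^ m) ^ i * (Q / 2 ^ m) ^ d ≤ Q ^ d * (1 / 2) ^ m := fun m => by
    obtain ⟨e, rfl⟩ := Nat.exists_eq_add_of_lt h
    have h2 : (1 : ℝ) ≤ ((2 : ℝ) ^ m) ^ e := one_le_pow₀ (one_le_pow₀ one_le_two)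
    calc ((2 : ℝ) ^ m) ^ i * (Q / 2 ^ m) ^ (i + e + 1)
        = Q ^ (i + e + 1) * (1 / 2) ^ m / ((2 : ℝ) ^ m) ^ e := by
          rw [one_div_pow, div_pow]
          field_simp
          ring
      _ ≤ Q ^ (i + e + 1) * (1 / 2) ^ m := div_le_self (by positivity) h2
  calc ∑ m ∈ Finset.range M, ((2 : ℝ) ^ m) ^ i * (Q / 2 ^ m) ^ d
      ≤ ∑ m ∈ Finset.range M, Q ^ d * (1 / 2) ^ m := Finset.sum_le_sum fun m _ => hterm m
    _ ≤ Q ^ d * 2 := by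
        rw [← Finset.mul_sum]
        gcongr
        exact sum_geometric_two_le M
    _ = 2 * Q ^ d := mul_comm _ _

theorem sum_pow_mul_div_pow_self (i : ℕ) (Q : ℝ) (M : ℕ) :
    ∑ m ∈ Finset.range M, ((2 : ℝ) ^ m) ^ i * (Q / 2 ^ m) ^ i = M * Q ^ i := by
  simp [← mul_pow, mul_div_cancel₀]

theorem log_floor_mul_add_one_le {a B : ℝ} (ha : 1 ≤ a) (hB : 2 ≤ B) :
    (Nat.log 2 ⌊a * B⌋₊ + 1 : ℝ) ≤ (Real.log a / Real.log 2 + 2) / Real.log 2 * Real.log B := by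
  have hl2 : 0 < Real.log 2 := Real.log_pos one_lt_two
  have hpow : (2 : ℝ) ^ Nat.log 2 ⌊a * B⌋₊ ≤ a * B := by
    exact_mod_cast pow_log_floor_le (b := 2) (by nlinarith)
  have hM : (Nat.log 2 ⌊a * B⌋₊ : ℝ) ≤ Real.log a / Real.log 2 + Real.log B / Real.log 2 := by
    rw [← add_div, le_div_iff₀ hl2, ← Real.log_mul (by linarith) (by linarith), ← Real.log_pow]
    exact Real.log_le_log (by positivity) hpow
  have ha' : 0 ≤ Real.log a / Real.log 2 := div_nonneg (Real.log_nonneg ha) hl2.le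
  have hB' : 1 ≤ Real.log B / Real.log 2 := (one_le_div hl2).2 (Real.log_le_log two_pos hB)
  rw [div_mul_eq_mul_div, mul_div_assoc]
  nlinarith

theorem ncard_factorBox_le (n i : ℕ) : ∃ K : ℝ, 0 < K ∧ ∀ B : ℝ, 1 ≤ B →
    ((factorBox n i B).ncard : ℝ) ≤ K * ∑ m ∈ Finset.range (Nat.log 2 ⌊(n + 1) * B⌋₊ + 1),
      ((2 : ℝ) ^ m) ^ i * ((n + 1) * B / 2 ^ m) ^ (n - i) := by
  refine ⟨(3 * 2 ^ (i + 1)) ^ i * (3 * 2 ^ (n - i)) ^ (n - i), by positivity, fun B hB => ?_⟩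
  have hQ : (1 : ℝ) ≤ (n + 1) * B := one_le_mul_of_one_le_of_one_le (by simp) hB
  rw [Finset.mul_sum]
  refine (Nat.cast_le.2 (ncard_factorBox_le_sum_card n i hB)).trans ?_
  push_cast
  refine Finset.sum_le_sum fun m hm => card_monicBox_mul_card_monicBox_le i (n - i)
    (one_le_pow₀ one_le_two) ?_
  calc (2 : ℝ) ^ m ≤ 2 ^ Nat.log 2 ⌊(n + 1) * B⌋₊ :=
        pow_le_pow_right₀ one_le_two (Nat.lt_succ_iff.1 (Finset.mem_range.1 hm))
    _ ≤ (n + 1) * B := by exact_mod_cast pow_log_floor_le (b := 2) hQ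

theorem stmt_4_general (n i : ℕ) :
    ∃ c : ℝ, 0 < c ∧ ∀ B : ℝ, 2 ≤ B →
      (2 * i < n →
        (Set.ncard {t : Fin n → ℤ |
            (∀ j, (|t j| : ℝ) ≤ B) ∧
            ∃ g : Polynomial ℚ, g.degree = (i : ℕ) ∧
              g ∣ ((X : ℚ[X]) ^ n + ∑ j : Fin n, C ((t j : ℚ)) * X ^ (n - 1 - (j : ℕ)))} : ℝ) ≤
          c * B ^ ((n : ℝ) - (i : ℝ))) ∧
      (2 * i = n →
        (Set.ncard {t : Fin n → ℤ |
            (∀ j, (|t j| : ℝ) ≤ B) ∧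
            ∃ g : Polynomial ℚ, g.degree = (i : ℕ) ∧
              g ∣ ((X : ℚ[X]) ^ n + ∑ j : Fin n, C ((t j : ℚ)) * X ^ (n - 1 - (j : ℕ)))} : ℝ) ≤
          c * B ^ ((n : ℝ) - (i : ℝ)) * Real.log B) := by
  obtain ⟨K, hK, hcount⟩ := ncard_factorBox_le n i
  set L : ℝ := (Real.log (n + 1) / Real.log 2 + 2) / Real.log 2
  have hL : 0 ≤ L := by
    have := Real.log_nonneg (by simp : (1 : ℝ) ≤ n + 1)
    have := Real.log_pos one_lt_two
    positivity
  refine ⟨K * (n + 1) ^ (n - i) * (2 + L), by positivity,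
    fun B hB => ⟨fun hlt => ?_, fun heq => ?_⟩⟩
  all_goals
    specialize hcount B (by linarith)
    rw [← Nat.cast_sub (by omega), Real.rpow_natCast]
  · calc _ ≤ _ := hcount
      _ ≤ K * (2 * ((n + 1) * B) ^ (n - i)) := by
          gcongr
          exact sum_pow_mul_div_pow_le_of_lt (by omega) (by positivity) _
      _ = K * (n + 1) ^ (n - i) * 2 * B ^ (n - i) := by rw [mul_pow]; ring
      _ ≤ K * (n + 1) ^ (n - i) * (2 + L) * B ^ (n - i) := by gcongr; linarith
  · have hni : n - i = i := by omega
    have hlogB : 0 ≤ Real.log B := Real.log_nonneg (by linarith)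
    rw [hni, sum_pow_mul_div_pow_self] at hcount
    rw [hni]
    calc _ ≤ _ := hcount
      _ ≤ K * (L * Real.log B * ((n + 1) * B) ^ i) := by
          push_cast
          gcongr
          exact log_floor_mul_add_one_le (by simp) hB
      _ = K * (n + 1) ^ i * L * B ^ i * Real.log B := by rw [mul_pow]; ring
      _ ≤ K * (n + 1) ^ i * (2 + L) * B ^ i * Real.log B := by gcongr; linarith

/-- Van der Waerden's bound: the number of `t ∈ ℤⁿ` with `‖t‖ ≤ B` such that
`xⁿ + t₁x^{n-1} + ⋯ + tₙ` has a factor of degree `i ≤ n/2` in `ℚ[x]` is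
`≪ B^{n-i}` if `2i < n` and `≪ B^{n-i} log B` if `2i = n`. -/
theorem stmt_4 (n i : ℕ) (hn : 2 ≤ n) (hi : 1 ≤ i) (hin : 2 * i ≤ n) :
    ∃ c : ℝ, 0 < c ∧ ∀ B : ℝ, 2 ≤ B →
      (2 * i < n →
        (Set.ncard {t : Fin n → ℤ |
            (∀ j, (|t j| : ℝ) ≤ B) ∧
            ∃ g : Polynomial ℚ, g.degree = (i : ℕ) ∧
              g ∣ ((X : ℚ[X]) ^ n + ∑ j : Fin n, C ((t j : ℚ)) * X ^ (n - 1 - (j : ℕ)))} : ℝ) ≤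
          c * B ^ ((n : ℝ) - (i : ℝ))) ∧
      (2 * i = n →
        (Set.ncard {t : Fin n → ℤ |
            (∀ j, (|t j| : ℝ) ≤ B) ∧
            ∃ g : Polynomial ℚ, g.degree = (i : ℕ) ∧
              g ∣ ((X : ℚ[X]) ^ n + ∑ j : Fin n, C ((t j : ℚ)) * X ^ (n - 1 - (j : ℕ)))} : ℝ) ≤
          c * B ^ ((n : ℝ) - (i : ℝ)) * Real.log B) :=
  stmt_4_general n i
end

section
/- Let n ≥ 1 and let B > 0 be a real number. Let 𝒜 be a finite set of tuples a = (a₀,…,aₙ) ∈ ℤ^{n+1} such that each a has gcd(a₀,…,aₙ) = 1 and max_i |aᵢ| ≤ B, and such that no two distinct elements of 𝒜 are proportional over ℚ (so distinct elements of 𝒜 represent distinct points of ℙⁿ(ℚ)). Let J be a finite set of rational primes, and for each p ∈ J let g_p ≥ 1 be a real number such that the number of equivalence classes of 𝒜 under the relation 'a ∼_p b iff p divides aᵢb_j − a_jbᵢ for all indices i, j' is at most g_p. Then |𝒜| ≤ (∑_{p ∈ J} log p − log(2B²)) / (∑_{p ∈ J} (log p)/g_p − log(2B²)), provided the denominator ∑_{p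 ∈ J} (log p)/g_p − log(2B²) is positive. -/
/-!
Gallagher's larger sieve. Let `T = ∑_{p ∈ J} log p · #{(a, b) ∈ 𝒜² | a ≡ b in ℙⁿ(𝔽_p)}`.
Since `𝒜` meets at most `g_p` classes modulo `p`, Cauchy–Schwarz gives
`T ≥ |𝒜|² ∑_{p ∈ J} log p / g_p`. Conversely, two distinct points have a nonzero minor
`aᵢbⱼ - aⱼbᵢ` of size at most `2B²`, divisible by every prime identifying them, so each
off-diagonal pair contributes at most `log (2B²)` and each diagonal pair at most `∑ log p`.
-/

open Finset

section Minors

variable {ι : Type*}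

/-- For primitive `a` and `b`, this says that they reduce to the same point of `ℙ(𝔽_p)`. -/
def MinorsDvd (p : ℕ) (a b : ι → ℤ) : Prop :=
  ∀ i j, (p : ℤ) ∣ a i * b j - a j * b i

instance [Fintype ι] (p : ℕ) : DecidableRel (MinorsDvd (ι := ι) p) :=
  fun _ _ => inferInstanceAs (Decidable (∀ _ _, _))

lemma minors_eq_zero_trans {K : Type*} [Field K] {a b r : ι → K} {k : ι} (hrk : r k ≠ 0)
    (ha : ∀ i j, a i * r j = a j * r i) (hb : ∀ i j, b i * r j = b j * r i) (i j : ι) :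
    a i * b j = a j * b i := by
  refine mul_right_cancel₀ (mul_ne_zero hrk hrk) ?_
  calc a i * b j * (r k * r k) = (a i * r k) * (b j * r k) := by ring
    _ = (a k * r i) * (b k * r j) := by rw [ha i k, hb j k]
    _ = (a j * r k) * (b i * r k) := by rw [ha j k, hb i k]; ring
    _ = a j * b i * (r k * r k) := by ring

lemma minorsDvd_iff_zmod (p : ℕ) (a b : ι → ℤ) :
    MinorsDvd p a b ↔ ∀ i j, (a i : ZMod p) * b j = a j * b i := by
  refine forall₂_congr fun i j => ?_
  rw [← ZMod.intCast_zmod_eq_zero_iff_dvd]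
  push_cast
  exact sub_eq_zero

lemma exists_not_dvd_of_gcd_eq_one [Fintype ι] {p : ℕ} (hp : p.Prime) {r : ι → ℤ}
    (hr : univ.gcd r = 1) : ∃ k, ¬ (p : ℤ) ∣ r k := by
  by_contra! h
  have : (p : ℤ) ∣ 1 := hr ▸ dvd_gcd fun i _ => h i
  exact hp.not_dvd_one (Int.natCast_dvd_natCast.mp this)

lemma MinorsDvd.trans_of_gcd_eq_one [Fintype ι] {p : ℕ} (hp : p.Prime) {a b r : ι → ℤ}
    (hr : univ.gcd r = 1) (ha : MinorsDvd p a r) (hb : MinorsDvd p b r) : MinorsDvd p a b := by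
  have : Fact p.Prime := ⟨hp⟩
  obtain ⟨k, hk⟩ := exists_not_dvd_of_gcd_eq_one hp hr
  rw [minorsDvd_iff_zmod] at *
  exact minors_eq_zero_trans (k := k) (by rwa [Ne, ZMod.intCast_zmod_eq_zero_iff_dvd]) ha hb

lemma exists_ne_zero_of_gcd_eq_one [Fintype ι] {a : ι → ℤ} (ha : univ.gcd a = 1) :
    ∃ i, a i ≠ 0 := by
  by_contra! h
  rw [gcd_eq_zero_iff.mpr fun i _ => h i] at ha
  exact zero_ne_one ha

lemma exists_eq_mul_of_minors_eq_zero {a b : ι → ℤ} {i : ι} (hi : a i ≠ 0)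
    (h : ∀ j, a i * b j - a j * b i = 0) : ∃ q : ℚ, ∀ j, (b j : ℚ) = q * a j := by
  refine ⟨b i / a i, fun j => ?_⟩
  rw [div_mul_eq_mul_div, eq_div_iff (Int.cast_ne_zero.mpr hi)]
  exact_mod_cast by linear_combination h j

lemma abs_minor_le {a b : ι → ℤ} {B : ℝ} (ha : ∀ i, (|a i| : ℝ) ≤ B) (hb : ∀ i, (|b i| : ℝ) ≤ B)
    (i j : ι) : (|a i * b j - a j * b i| : ℝ) ≤ 2 * B ^ 2 := by
  calc |(a i : ℝ) * b j - a j * b i| ≤ |(a i : ℝ)| * |(b j : ℝ)| + |(a j : ℝ)| * |(b i : ℝ)| := by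
        rw [← abs_mul, ← abs_mul]; exact abs_sub _ _
    _ ≤ B * B + B * B := by
        have hB : 0 ≤ B := (abs_nonneg _).trans (ha i)
        gcongr <;> first | exact ha _ | exact hb _
    _ = 2 * B ^ 2 := by ring

end Minors

lemma sum_log_le_log_natAbs {J : Finset ℕ} (hJ : ∀ p ∈ J, p.Prime) {m : ℤ} (hm : m ≠ 0)
    (hdvd : ∀ p ∈ J, (p : ℤ) ∣ m) : ∑ p ∈ J, Real.log p ≤ Real.log m.natAbs := by
  have hprod : ∏ p ∈ J, p ≤ m.natAbs := Nat.le_of_dvd (Int.natAbs_pos.mpr hm) <|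
    prod_primes_dvd _ (fun p hp => (hJ p hp).prime) fun p hp => Int.natCast_dvd.mp (hdvd p hp)
  rw [← Real.log_prod fun p hp => by exact_mod_cast (hJ p hp).ne_zero]
  refine Real.log_le_log (prod_pos fun p hp => by exact_mod_cast (hJ p hp).pos) ?_
  rw [← Nat.cast_prod]
  exact_mod_cast hprod

lemma sq_card_le_card_mul_card_filter_eq {α β : Type*} [DecidableEq β] {s : Finset α}
    {t : Finset β} {f : α → β} (hf : ∀ a ∈ s, f a ∈ t) :
    #s ^ 2 ≤ #t * #{ab ∈ s ×ˢ s | f ab.1 = f ab.2} := by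
  have hfiber : #{ab ∈ s ×ˢ s | f ab.1 = f ab.2} = ∑ b ∈ t, #{a ∈ s | f a = b} ^ 2 := by
    rw [card_eq_sum_card_fiberwise (f := fun ab => f ab.1)
      fun ab hab => hf _ (mem_product.mp (mem_filter.mp hab).1).1]
    refine sum_congr rfl fun b _ => ?_
    rw [sq, ← card_product]
    congr 1
    ext ⟨x, y⟩
    simp only [mem_filter, mem_product]
    grind
  rw [hfiber, card_eq_sum_card_fiberwise hf]
  exact sq_sum_le_card_mul_sum_sq

lemma sum_mul_card_filter_le {α : Type*} [DecidableEq α] (s : Finset α) (J : Finset ℕ)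
    (w : ℕ → ℝ) (hw : ∀ p ∈ J, 0 ≤ w p) (r : ℕ → α → α → Prop) [∀ p, DecidableRel (r p)]
    (L : ℝ) (hoff : ∀ a ∈ s, ∀ b ∈ s, a ≠ b → ∑ p ∈ J with r p a b, w p ≤ L) :
    ∑ p ∈ J, w p * #{ab ∈ s ×ˢ s | r p ab.1 ab.2} ≤
      #s * ∑ p ∈ J, w p + #s * (#s - 1) * L := by
  have hswap : ∑ p ∈ J, w p * #{ab ∈ s ×ˢ s | r p ab.1 ab.2} =
      ∑ ab ∈ s ×ˢ s, ∑ p ∈ J with r p ab.1 ab.2, w p := by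
    simp only [card_filter, Nat.cast_sum, Nat.cast_ite, Nat.cast_one, Nat.cast_zero, mul_sum,
      mul_boole, sum_filter]
    exact sum_comm
  have hdiag : ∑ ab ∈ s.diag, ∑ p ∈ J with r p ab.1 ab.2, w p ≤ #s * ∑ p ∈ J, w p := by
    rw [← diag_card, ← nsmul_eq_mul]
    exact sum_le_card_nsmul _ _ _ fun ab _ => sum_le_sum_of_subset_of_nonneg (filter_subset _ _)
      fun p hp _ => hw p hp
  have hoffDiag : ∑ ab ∈ s.offDiag, ∑ p ∈ J with r p ab.1 ab.2, w p ≤ #s * (#s - 1) * L := by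
    have hcard : (#s.offDiag : ℝ) = #s * (#s - 1) := by
      rw [offDiag_card, Nat.cast_sub (Nat.le_mul_self _)]
      push_cast
      ring
    rw [← hcard, ← nsmul_eq_mul]
    exact sum_le_card_nsmul _ _ _ fun ab hab => by
      obtain ⟨ha, hb, hne⟩ := mem_offDiag.mp hab
      exact hoff _ ha _ hb hne
  rw [hswap, ← diag_union_offDiag, sum_union (disjoint_diag_offDiag s)]
  exact add_le_add hdiag hoffDiag

lemma card_mul_sub_le_of_sq_card_le {α : Type*} [DecidableEq α] {s : Finset α}
    (hs : s.Nonempty) (J : Finset ℕ) {w g : ℕ → ℝ} (hw : ∀ p ∈ J, 0 ≤ w p)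
    (hg : ∀ p ∈ J, 0 < g p) (r : ℕ → α → α → Prop) [∀ p, DecidableRel (r p)] (L : ℝ)
    (hpairs : ∀ p ∈ J, (#s : ℝ) ^ 2 ≤ g p * #{ab ∈ s ×ˢ s | r p ab.1 ab.2})
    (hoff : ∀ a ∈ s, ∀ b ∈ s, a ≠ b → ∑ p ∈ J with r p a b, w p ≤ L) :
    #s * (∑ p ∈ J, w p / g p - L) ≤ ∑ p ∈ J, w p - L := by
  have hlower : (#s : ℝ) ^ 2 * ∑ p ∈ J, w p / g p ≤
      ∑ p ∈ J, w p * #{ab ∈ s ×ˢ s | r p ab.1 ab.2} := by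
    rw [mul_sum]
    refine sum_le_sum fun p hp => ?_
    calc (#s : ℝ) ^ 2 * (w p / g p) ≤ g p * #{ab ∈ s ×ˢ s | r p ab.1 ab.2} * (w p / g p) := by
          gcongr
          · exact div_nonneg (hw p hp) (hg p hp).le
          · exact hpairs p hp
      _ = w p * #{ab ∈ s ×ˢ s | r p ab.1 ab.2} := by field_simp [(hg p hp).ne']
  have hupper := sum_mul_card_filter_le s J w hw r L hoff
  have hN : (0 : ℝ) < #s := by exact_mod_cast hs.card_pos
  nlinarith

section PrimitivePoints

variable {ι : Type*} [Fintype ι]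

lemma sq_card_le_card_mul_card_minorsDvd {p : ℕ} (hp : p.Prime) {𝒜 R : Finset (ι → ℤ)}
    (hprim : ∀ a ∈ 𝒜, univ.gcd a = 1) (hR : R ⊆ 𝒜) (hrep : ∀ a ∈ 𝒜, ∃ r ∈ R, MinorsDvd p a r) :
    #𝒜 ^ 2 ≤ #R * #{ab ∈ 𝒜 ×ˢ 𝒜 | MinorsDvd p ab.1 ab.2} := by
  choose! F hFR hF using hrep
  refine (sq_card_le_card_mul_card_filter_eq hFR).trans (Nat.mul_le_mul_left _ (card_le_card ?_))
  refine monotone_filter_right _ fun ab hab hFab => ?_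
  obtain ⟨ha, hb⟩ := mem_product.mp hab
  exact (hF _ ha).trans_of_gcd_eq_one hp (hprim _ (hR (hFR _ ha))) (hFab ▸ hF _ hb)

lemma sum_log_filter_minorsDvd_le {J : Finset ℕ} (hJ : ∀ p ∈ J, p.Prime) {a b : ι → ℤ}
    (ha : univ.gcd a = 1) (hab : ¬ ∃ q : ℚ, ∀ i, (b i : ℚ) = q * a i) {B : ℝ}
    (haB : ∀ i, (|a i| : ℝ) ≤ B) (hbB : ∀ i, (|b i| : ℝ) ≤ B) :
    ∑ p ∈ J with MinorsDvd p a b, Real.log p ≤ Real.log (2 * B ^ 2) := by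
  obtain ⟨i, hi⟩ := exists_ne_zero_of_gcd_eq_one ha
  obtain ⟨j, hj⟩ : ∃ j, a i * b j - a j * b i ≠ 0 := by
    by_contra! h
    exact hab (exists_eq_mul_of_minors_eq_zero hi h)
  have hdvd : ∀ p ∈ J.filter (MinorsDvd · a b), (p : ℤ) ∣ a i * b j - a j * b i :=
    fun p hp => (mem_filter.mp hp).2 i j
  refine (sum_log_le_log_natAbs (fun p hp => hJ p (mem_filter.mp hp).1) hj hdvd).trans
    (Real.log_le_log ?_ ?_)
  · exact_mod_cast Int.natAbs_pos.mpr hj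
  · rw [Nat.cast_natAbs, Int.cast_abs]
    exact_mod_cast abs_minor_le haB hbB i j

end PrimitivePoints

theorem stmt_7_general (n : ℕ) (B : ℝ)
    (𝒜 : Finset (Fin (n + 1) → ℤ))
    (hprim : ∀ a ∈ 𝒜, Finset.univ.gcd a = 1)
    (hbound : ∀ a ∈ 𝒜, ∀ i, (|a i| : ℝ) ≤ B)
    (hdist : ∀ a ∈ 𝒜, ∀ b ∈ 𝒜, (∃ q : ℚ, ∀ i, (b i : ℚ) = q * (a i : ℚ)) → a = b)
    (J : Finset ℕ) (hJ : ∀ p ∈ J, p.Prime)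
    (g : ℕ → ℝ) (hg1 : ∀ p ∈ J, 1 ≤ g p)
    (hclasses : ∀ p ∈ J, ∃ R : Finset (Fin (n + 1) → ℤ), R ⊆ 𝒜 ∧ (R.card : ℝ) ≤ g p ∧
      ∀ a ∈ 𝒜, ∃ r ∈ R, ∀ i j, (p : ℤ) ∣ (a i * r j - a j * r i))
    (hden : 0 < (∑ p ∈ J, Real.log p / g p) - Real.log (2 * B ^ 2)) :
    (𝒜.card : ℝ) ≤ ((∑ p ∈ J, Real.log p) - Real.log (2 * B ^ 2)) /
      ((∑ p ∈ J, Real.log p / g p) - Real.log (2 * B ^ 2)) := by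
  have hlog : ∀ p ∈ J, 0 ≤ Real.log p := fun p hp =>
    Real.log_nonneg (by exact_mod_cast (hJ p hp).one_le)
  rw [le_div_iff₀ hden]
  rcases 𝒜.eq_empty_or_nonempty with rfl | h𝒜
  · have : ∑ p ∈ J, Real.log p / g p ≤ ∑ p ∈ J, Real.log p :=
      sum_le_sum fun p hp => div_le_self (hlog p hp) (hg1 p hp)
    simp only [card_empty, Nat.cast_zero, zero_mul]
    linarith
  refine card_mul_sub_le_of_sq_card_le h𝒜 J hlog (fun p hp => one_pos.trans_le (hg1 p hp))
    MinorsDvd _ (fun p hp => ?_) fun a ha b hb hab => ?_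
  · obtain ⟨R, hR, hRg, hrep⟩ := hclasses p hp
    have := sq_card_le_card_mul_card_minorsDvd (hJ p hp) hprim hR hrep
    calc (#𝒜 : ℝ) ^ 2 ≤ #R * #{ab ∈ 𝒜 ×ˢ 𝒜 | MinorsDvd p ab.1 ab.2} := by exact_mod_cast this
      _ ≤ _ := by gcongr
  · exact sum_log_filter_minorsDvd_le hJ (hprim a ha) (fun h => hab (hdist a ha b hb h))
      (hbound a ha) (hbound b hb)

/-- The larger sieve for rational points of `ℙⁿ(ℚ)`, expressed via primitive integer
coordinates.  The hypothesis `hclasses` says that `𝒜` has at most `g p` equivalence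
classes modulo `p` (for the relation of representing the same point of `ℙⁿ(𝔽_p)`),
expressed via a set of representatives `R ⊆ 𝒜`. -/
theorem stmt_7 (n : ℕ) (hn : 1 ≤ n) (B : ℝ) (hB : 0 < B)
    (𝒜 : Finset (Fin (n + 1) → ℤ))
    (hprim : ∀ a ∈ 𝒜, Finset.univ.gcd a = 1)
    (hbound : ∀ a ∈ 𝒜, ∀ i, (|a i| : ℝ) ≤ B)
    (hdist : ∀ a ∈ 𝒜, ∀ b ∈ 𝒜, (∃ q : ℚ, ∀ i, (b i : ℚ) = q * (a i : ℚ)) → a = b)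
    (J : Finset ℕ) (hJ : ∀ p ∈ J, p.Prime)
    (g : ℕ → ℝ) (hg1 : ∀ p ∈ J, 1 ≤ g p)
    (hclasses : ∀ p ∈ J, ∃ R : Finset (Fin (n + 1) → ℤ), R ⊆ 𝒜 ∧ (R.card : ℝ) ≤ g p ∧
      ∀ a ∈ 𝒜, ∃ r ∈ R, ∀ i j, (p : ℤ) ∣ (a i * r j - a j * r i))
    (hden : 0 < (∑ p ∈ J, Real.log p / g p) - Real.log (2 * B ^ 2)) :
    (𝒜.card : ℝ) ≤ ((∑ p ∈ J, Real.log p) - Real.log (2 * B ^ 2)) /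
      ((∑ p ∈ J, Real.log p / g p) - Real.log (2 * B ^ 2)) :=
  stmt_7_general n B 𝒜 hprim hbound hdist J hJ g hg1 hclasses hden
end

section
/- Let k be a number field of degree d := [k:ℚ] with ring of integers 𝒪_k, and let n ≥ 1. Let 𝒜 be a finite subset of 𝒪_kⁿ and B > 0 a real number such that ‖P − Q‖ ≤ B for all P, Q ∈ 𝒜. Let J be a finite set of maximal ideals of 𝒪_k, and for every 𝔭 ∈ J let g_𝔭 ≥ 1 be a real number such that the image of 𝒜 under coordinatewise reduction 𝒪_kⁿ → (𝒪_k/𝔭)ⁿ has cardinality at most g_𝔭. Then |𝒜| ≤ (∑_{𝔭 ∈ J} log N(𝔭) − d·log B) / (∑_{𝔭 ∈ J} (log N(𝔭))/g_𝔭 − d·log B), provided the denominator ∑_{𝔭 ∈ J} (log N(𝔭))/g_𝔭 − d·log B is positive. -/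
/-!
For each prime `𝔭`, Cauchy–Schwarz over the fibres of reduction mod `𝔭` shows that at least
`|𝒜|² / g_𝔭` ordered pairs `(P, Q)` of `𝒜` are congruent mod `𝔭`. Weighting by `log N(𝔭)` and
summing over `𝔭 ∈ J`, the pairs carry total weight at least `|𝒜|² ∑ log N(𝔭) / g_𝔭`.
Conversely, if `P ≠ Q` then some coordinate difference `x = Pᵢ - Qᵢ` is nonzero and lies in
every `𝔭` modulo which `P ≡ Q`, so the product of these `N(𝔭)` divides `N(x)`, and
`|N(x)| ≤ B^d` because every conjugate of `x` is at most `B`. The diagonal pairs carry weight at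
most `|𝒜| ∑ log N(𝔭)`, the others at most `d log B` each; comparing the two bounds gives the
inequality.
-/

open NumberField Finset Module

namespace Finset

variable {α β : Type*} [DecidableEq β]

lemma card_filter_product_eq_sum_sq (s : Finset α) (f : α → β) :
    #{pq ∈ s ×ˢ s | f pq.1 = f pq.2} = ∑ y ∈ s.image f, #{a ∈ s | f a = y} ^ 2 := by
  rw [card_eq_sum_card_fiberwise (f := fun pq ↦ f pq.1) (t := s.image f)
    fun pq hpq ↦ mem_image_of_mem f (mem_product.1 (mem_filter.1 hpq).1).1]
  refine sum_congr rfl fun y _ ↦ ?_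
  rw [sq, ← card_product]
  congr 1
  ext ⟨a, b⟩
  simp only [mem_filter, mem_product]
  constructor
  · rintro ⟨⟨⟨ha, hb⟩, hab⟩, rfl⟩
    exact ⟨⟨ha, rfl⟩, hb, hab.symm⟩
  · rintro ⟨⟨ha, rfl⟩, hb, hab⟩
    exact ⟨⟨⟨ha, hb⟩, hab.symm⟩, rfl⟩

lemma sq_card_le_card_image_mul_card_filter_product (s : Finset α) (f : α → β) :
    #s ^ 2 ≤ #(s.image f) * #{pq ∈ s ×ˢ s | f pq.1 = f pq.2} := by
  rw [card_filter_product_eq_sum_sq, card_eq_sum_card_image f s]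
  exact sq_sum_le_card_mul_sum_sq

lemma sum_product_self_le [DecidableEq α] (s : Finset α) (w : α × α → ℝ) {C D : ℝ}
    (hdiag : ∀ a ∈ s, w (a, a) ≤ C) (hoff : ∀ a ∈ s, ∀ b ∈ s, a ≠ b → w (a, b) ≤ D) :
    ∑ p ∈ s ×ˢ s, w p ≤ #s * C + ((#s : ℝ) ^ 2 - #s) * D := by
  have hoff_card : ((#s : ℝ) ^ 2 - #s) = #s.offDiag := by
    rw [offDiag_card, Nat.cast_sub (Nat.le_mul_self _)]
    push_cast
    ring
  rw [hoff_card, ← diag_union_offDiag, sum_union (disjoint_diag_offDiag s)]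
  gcongr
  · rw [← diag_card, ← nsmul_eq_mul]
    refine sum_le_card_nsmul _ _ _ fun p hp ↦ ?_
    obtain ⟨ha, hp⟩ := mem_diag.1 hp
    rw [← Prod.mk.eta (p := p), ← hp]
    exact hdiag _ ha
  · rw [← nsmul_eq_mul]
    refine sum_le_card_nsmul _ _ _ fun p hp ↦ ?_
    obtain ⟨ha, hb, hab⟩ := mem_offDiag.1 hp
    exact hoff _ ha _ hb hab

end Finset

theorem card_le_of_largerSieve {α ι : Type*} {β : ι → Type*} [DecidableEq α]
    [∀ i, DecidableEq (β i)] (A : Finset α) (J : Finset ι) (f : ∀ i, α → β i) (L g : ι → ℝ)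
    (D : ℝ) (hL : ∀ i ∈ J, 0 ≤ L i) (hg : ∀ i ∈ J, 1 ≤ g i)
    (himage : ∀ i ∈ J, (#(A.image (f i)) : ℝ) ≤ g i)
    (hsep : ∀ a ∈ A, ∀ b ∈ A, a ≠ b → ∑ i ∈ J with f i a = f i b, L i ≤ D)
    (hden : 0 < ∑ i ∈ J, L i / g i - D) :
    (#A : ℝ) ≤ (∑ i ∈ J, L i - D) / (∑ i ∈ J, L i / g i - D) := by
  set N : ℝ := ((A.card : ℕ) : ℝ)
  set c : ι → ℝ := fun i ↦ ((A ×ˢ A).filter fun p ↦ f i p.1 = f i p.2).card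
  have hg_pos : ∀ i ∈ J, 0 < g i := fun i hi ↦ one_pos.trans_le (hg i hi)
  have hlower : N ^ 2 * ∑ i ∈ J, L i / g i ≤ ∑ i ∈ J, L i * c i := by
    rw [mul_sum]
    refine sum_le_sum fun i hi ↦ ?_
    have hcs : N ^ 2 ≤ g i * c i := by
      calc N ^ 2 ≤ #(A.image (f i)) * c i := by
            simp only [N, c]
            exact_mod_cast sq_card_le_card_image_mul_card_filter_product A (f i)
        _ ≤ g i * c i := by gcongr; exact himage i hi
    calc N ^ 2 * (L i / g i) = L i * (N ^ 2 / g i) := by ring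
      _ ≤ L i * c i := by
          gcongr
          · exact hL i hi
          · exact (div_le_iff₀' (hg_pos i hi)).2 hcs
  have hcount : ∑ i ∈ J, L i * c i = ∑ p ∈ A ×ˢ A, ∑ i ∈ J with f i p.1 = f i p.2, L i := by
    simp only [c, card_filter, Nat.cast_sum, mul_sum, sum_filter]
    rw [sum_comm]
    simp
  have hupper : ∑ p ∈ A ×ˢ A, ∑ i ∈ J with f i p.1 = f i p.2, L i ≤
      N * ∑ i ∈ J, L i + (N ^ 2 - N) * D :=
    sum_product_self_le A _
      (fun a _ ↦ sum_le_sum_of_subset_of_nonneg (filter_subset _ _) fun i hi _ ↦ hL i hi) hsep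
  have hmono : ∑ i ∈ J, L i / g i ≤ ∑ i ∈ J, L i :=
    sum_le_sum fun i hi ↦ div_le_self (hL i hi) (hg i hi)
  rw [le_div_iff₀ hden]
  rcases (Nat.cast_nonneg _ : (0 : ℝ) ≤ N).eq_or_lt with hN | hN
  · rw [show N = 0 from hN.symm]
    linarith
  · nlinarith

theorem Ideal.prod_absNorm_le_natAbs_norm {S : Type*} [CommRing S] [IsDedekindDomain S]
    [Module.Free ℤ S] [Module.Finite ℤ S] {x : S} (hx : x ≠ 0) {T : Finset (Ideal S)}
    (hT : ∀ p ∈ T, p.IsPrime ∧ x ∈ p) :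
    ∏ p ∈ T, absNorm p ≤ (Algebra.norm ℤ x).natAbs := by
  have hprime : ∀ p ∈ T, Prime p := fun p hp ↦
    (prime_iff_isPrime ((Submodule.ne_bot_iff p).2 ⟨x, (hT p hp).2, hx⟩)).2 (hT p hp).1
  have hdvd : ∏ p ∈ T, p ∣ span {x} :=
    prod_primes_dvd _ hprime fun p hp ↦ dvd_span_singleton.2 (hT p hp).2
  rw [← absNorm_span_singleton, ← map_prod]
  refine Nat.le_of_dvd ?_ (map_dvd absNorm hdvd)
  rw [absNorm_span_singleton, Int.natAbs_pos]
  exact Algebra.norm_ne_zero_iff.2 hx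

section NumberField

variable {K : Type*} [Field K] [NumberField K]

theorem NumberField.abs_norm_le_pow_finrank {x : K} {B : ℝ} (hx : ∀ σ : K →+* ℂ, ‖σ x‖ ≤ B) :
    |(Algebra.norm ℚ x : ℝ)| ≤ B ^ finrank ℚ K := by
  have hprod := congr_arg norm (Algebra.norm_eq_prod_embeddings ℚ ℂ x)
  rw [eq_ratCast, Complex.norm_ratCast, norm_prod] at hprod
  calc |(Algebra.norm ℚ x : ℝ)| = ∏ σ : K →ₐ[ℚ] ℂ, ‖σ x‖ := hprod
    _ ≤ ∏ _σ : K →ₐ[ℚ] ℂ, B := prod_le_prod (fun σ _ ↦ norm_nonneg _) fun σ _ ↦ hx σ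
    _ = B ^ finrank ℚ K := by rw [prod_const, card_univ, AlgHom.card]

theorem NumberField.sum_log_card_quotient_le {x : 𝓞 K} (hx : x ≠ 0) {B : ℝ}
    (hB : ∀ σ : K →+* ℂ, ‖σ x‖ ≤ B) {T : Finset (Ideal (𝓞 K))}
    (hT : ∀ p ∈ T, p.IsPrime ∧ x ∈ p) :
    ∑ p ∈ T, Real.log (Nat.card (𝓞 K ⧸ p)) ≤ finrank ℚ K * Real.log B := by
  have hcard : ∀ p : Ideal (𝓞 K), Nat.card (𝓞 K ⧸ p) = Ideal.absNorm p := fun p ↦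
    (Submodule.cardQuot_apply _).symm
  have hne : ∀ p ∈ T, Ideal.absNorm p ≠ 0 := fun p hp ↦
    Ideal.absNorm_eq_zero_iff.not.2 ((Submodule.ne_bot_iff p).2 ⟨x, (hT p hp).2, hx⟩)
  have hpos : 0 < ∏ p ∈ T, Ideal.absNorm p := prod_pos fun p hp ↦ Nat.pos_of_ne_zero (hne p hp)
  have hnorm : ((∏ p ∈ T, Ideal.absNorm p : ℕ) : ℝ) ≤ B ^ finrank ℚ K := calc
    _ ≤ ((Algebra.norm ℤ x).natAbs : ℝ) := by
      exact_mod_cast Ideal.prod_absNorm_le_natAbs_norm hx hT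
    _ = |(Algebra.norm ℚ (x : K) : ℝ)| := by
      rw [← Algebra.coe_norm_int, Nat.cast_natAbs]
      push_cast
      rfl
    _ ≤ B ^ finrank ℚ K := abs_norm_le_pow_finrank hB
  simp_rw [hcard]
  rw [← Real.log_pow, ← Real.log_prod fun p hp ↦ by exact_mod_cast hne p hp]
  exact_mod_cast Real.log_le_log (by exact_mod_cast hpos) hnorm

theorem NumberField.sum_log_card_quotient_le_of_ne {ι : Type*} {P Q : ι → 𝓞 K} (hPQ : P ≠ Q)
    {B : ℝ} (hB : ∀ (σ : K →+* ℂ) (i : ι), ‖σ ((P i : K) - (Q i : K))‖ ≤ B)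
    {T : Finset (Ideal (𝓞 K))}
    (hT : ∀ p ∈ T, p.IsPrime ∧ ∀ i, Ideal.Quotient.mk p (P i) = Ideal.Quotient.mk p (Q i)) :
    ∑ p ∈ T, Real.log (Nat.card (𝓞 K ⧸ p)) ≤ finrank ℚ K * Real.log B := by
  obtain ⟨i, hi⟩ := Function.ne_iff.1 hPQ
  refine sum_log_card_quotient_le (sub_ne_zero.2 hi) (by simpa using (hB · i)) fun p hp ↦ ?_
  exact ⟨(hT p hp).1, Ideal.Quotient.eq.1 ((hT p hp).2 i)⟩

end NumberField

theorem stmt_9_general (k : Type) [Field k] [NumberField k] (n : ℕ)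
    (𝒜 : Finset (Fin n → 𝓞 k)) (B : ℝ)
    (hbound : ∀ P ∈ 𝒜, ∀ Q ∈ 𝒜, ∀ (σ : k →+* ℂ) (i : Fin n),
      ‖σ ((P i : k) - (Q i : k))‖ ≤ B)
    (J : Finset (Ideal (𝓞 k))) (hJ : ∀ 𝔭 ∈ J, 𝔭.IsMaximal)
    (g : Ideal (𝓞 k) → ℝ) (hg1 : ∀ 𝔭 ∈ J, 1 ≤ g 𝔭)
    (hred : ∀ 𝔭 ∈ J,
      (Set.ncard ((fun (P : Fin n → 𝓞 k) (i : Fin n) => Ideal.Quotient.mk 𝔭 (P i)) ''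
        (𝒜 : Set (Fin n → 𝓞 k))) : ℝ) ≤ g 𝔭)
    (hden : 0 < (∑ 𝔭 ∈ J, Real.log (Nat.card (𝓞 k ⧸ 𝔭)) / g 𝔭) -
      (Module.finrank ℚ k : ℝ) * Real.log B) :
    (𝒜.card : ℝ) ≤
      ((∑ 𝔭 ∈ J, Real.log (Nat.card (𝓞 k ⧸ 𝔭))) -
          (Module.finrank ℚ k : ℝ) * Real.log B) /
        ((∑ 𝔭 ∈ J, Real.log (Nat.card (𝓞 k ⧸ 𝔭)) / g 𝔭) -
          (Module.finrank ℚ k : ℝ) * Real.log B) := by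
  classical
  refine card_le_of_largerSieve 𝒜 J (fun 𝔭 P i ↦ Ideal.Quotient.mk 𝔭 (P i)) _ g _
    (fun _ _ ↦ Real.log_natCast_nonneg _) hg1 (fun 𝔭 h𝔭 ↦ ?_) (fun P hP Q hQ hPQ ↦ ?_) hden
  · rw [← Set.ncard_coe_finset, coe_image]
    exact hred 𝔭 h𝔭
  · refine sum_log_card_quotient_le_of_ne hPQ (hbound P hP Q hQ) fun 𝔭 h𝔭 ↦ ?_
    rw [mem_filter] at h𝔭
    exact ⟨(hJ 𝔭 h𝔭.1).isPrime, congrFun h𝔭.2⟩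

/-- The larger sieve for integral points of `𝒪_kⁿ` over a number field `k`. -/
theorem stmt_9 (k : Type) [Field k] [NumberField k] (n : ℕ) (hn : 1 ≤ n)
    (𝒜 : Finset (Fin n → 𝓞 k)) (B : ℝ) (hB : 0 < B)
    (hbound : ∀ P ∈ 𝒜, ∀ Q ∈ 𝒜, ∀ (σ : k →+* ℂ) (i : Fin n),
      ‖σ ((P i : k) - (Q i : k))‖ ≤ B)
    (J : Finset (Ideal (𝓞 k))) (hJ : ∀ 𝔭 ∈ J, 𝔭.IsMaximal)
    (g : Ideal (𝓞 k) → ℝ) (hg1 : ∀ 𝔭 ∈ J, 1 ≤ g 𝔭)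
    (hred : ∀ 𝔭 ∈ J,
      (Set.ncard ((fun (P : Fin n → 𝓞 k) (i : Fin n) => Ideal.Quotient.mk 𝔭 (P i)) ''
        (𝒜 : Set (Fin n → 𝓞 k))) : ℝ) ≤ g 𝔭)
    (hden : 0 < (∑ 𝔭 ∈ J, Real.log (Nat.card (𝓞 k ⧸ 𝔭)) / g 𝔭) -
      (Module.finrank ℚ k : ℝ) * Real.log B) :
    (𝒜.card : ℝ) ≤
      ((∑ 𝔭 ∈ J, Real.log (Nat.card (𝓞 k ⧸ 𝔭))) -
          (Module.finrank ℚ k : ℝ) * Real.log B) /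
        ((∑ 𝔭 ∈ J, Real.log (Nat.card (𝓞 k ⧸ 𝔭)) / g 𝔭) -
          (Module.finrank ℚ k : ℝ) * Real.log B) :=
  stmt_9_general k n 𝒜 B hbound J hJ g hg1 hred hden
end

section
/- Let n ≥ 1 and let φ : ℤⁿ → ℤⁿ be the map given by n polynomials φ₁,…,φₙ ∈ ℤ[x₁,…,xₙ]. Fix P ∈ ℤⁿ, and suppose the forward orbit {P, φ(P), φ²(P), …} ⊆ ℤⁿ is infinite. For an integer tuple Q, set h(Q) := log max(1, max_i |Qᵢ|). Suppose there are real numbers d > 1 and c ≥ 0 such that h(φ^i(P)) ≤ d^i·(h(P) + c) for all integers i ≥ 0. For each prime p, let m_p(φ,P) be the cardinality of the forward orbit of the reduction of P in (ℤ/pℤ)ⁿ under the reduction of φ modulo p. Then for every real ε with 0 < ε < 1/log d, the set of primes p with m_p(φ,P) ≥ ε·log p has natural density 1 among the primes; that is, (#{p ≤ x : p prime and m_p(φ,P) ≥ ε·log p}) / (#{p ≤ x : p prime}) tends to 1 as x → ∞. -/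
/-- The self-map of affine `n`-space (over a commutative ring `R`) defined by a
system of `n` polynomials in `n` variables. -/
noncomputable def polyMap {n : ℕ} {R : Type} [CommRing R]
    (F : Fin n → MvPolynomial (Fin n) R) : (Fin n → R) → (Fin n → R) :=
  fun v i => MvPolynomial.eval v (F i)

private lemma orbit_redIter {n : ℕ} (F : Fin n → MvPolynomial (Fin n) ℤ) (P : Fin n → ℤ)
    (p : ℕ) (m : ℕ) :
    (fun j => (((polyMap F)^[m] P j : ℤ) : ZMod p)) =
      (polyMap fun i => (F i).map (Int.castRingHom (ZMod p)))^[m] (fun j => ((P j : ZMod p))) := by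
  induction m with
  | zero => rfl
  | succ m ih =>
    rw [Function.iterate_succ_apply', Function.iterate_succ_apply', ← ih]
    funext i
    simp only [polyMap, MvPolynomial.eval_map]
    have := MvPolynomial.eval₂_comp_left (Int.castRingHom (ZMod p))
      (RingHom.id ℤ) ((polyMap F)^[m] P) (F i)
    simp only [MvPolynomial.eval₂_id, RingHom.comp_id] at this
    exact this

private lemma orbit_iter_inj {α : Type*} {f : α → α} {x : α}
    (h : (Set.range fun m : ℕ => f^[m] x).Infinite) :
    Function.Injective (fun m : ℕ => f^[m] x) := by
  by_contra hni
  apply h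
  simp only [Function.Injective, not_forall] at hni
  obtain ⟨a, b, hab, hne⟩ := hni
  wlog hlt : a < b generalizing a b
  · exact this b a hab.symm (Ne.symm hne) (by omega)
  have ht0 : 0 < b - a := by omega
  have hper : Function.IsPeriodicPt f (b - a) (f^[a] x) := by
    unfold Function.IsPeriodicPt Function.IsFixedPt
    rw [← Function.iterate_add_apply]
    have : b - a + a = b := by omega
    rw [this, ← hab]
  have hsub : (Set.range fun m : ℕ => f^[m] x) ⊆
      (fun m : ℕ => f^[m] x) '' (Set.Iio b) := by
    rintro _ ⟨m, rfl⟩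
    by_cases hm : m < b
    · exact ⟨m, Set.mem_Iio.mpr hm, rfl⟩
    · refine ⟨(m - a) % (b - a) + a, Set.mem_Iio.mpr ?_, ?_⟩
      · have := Nat.mod_lt (m - a) ht0; omega
      · simp only
        rw [Function.iterate_add_apply, hper.iterate_mod_apply,
          ← Function.iterate_add_apply]
        congr 1
        omega
  exact ((Set.finite_Iio _).image _).subset hsub

private lemma orbit_cheb1 (m : ℕ) (hm : 1 ≤ m) :
    Nat.centralBinom m ≤ (2 * m) ^ (Nat.primeCounting (2 * m)) := by
  have h2m : 0 < 2 * m := by omega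
  conv_lhs => rw [← Nat.factorization_prod_pow_eq_self (Nat.centralBinom_ne_zero m)]
  rw [Finsupp.prod]
  have hsub : (Nat.centralBinom m).factorization.support ⊆ Nat.primesBelow (2 * m + 1) := by
    intro p hp
    rw [Nat.support_factorization, Nat.mem_primeFactors] at hp
    obtain ⟨hpp, hpd, -⟩ := hp
    have h1 : p ^ (Nat.centralBinom m).factorization p ≤ 2 * m := by
      rw [Nat.centralBinom_eq_two_mul_choose]
      exact Nat.pow_factorization_choose_le h2m
    have h2 : 1 ≤ (Nat.centralBinom m).factorization p :=
      (Nat.Prime.dvd_iff_one_le_factorization hpp (Nat.centralBinom_ne_zero m)).mp hpd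
    have hple : p ≤ 2 * m := le_trans (by
      calc p = p ^ 1 := (pow_one p).symm
        _ ≤ p ^ (Nat.centralBinom m).factorization p :=
          Nat.pow_le_pow_right hpp.one_lt.le h2) h1
    exact Nat.mem_primesBelow.mpr ⟨by omega, hpp⟩
  have step1 : (∏ p ∈ (Nat.centralBinom m).factorization.support,
      p ^ (Nat.centralBinom m).factorization p) ≤
      (2 * m) ^ (Nat.centralBinom m).factorization.support.card := by
    apply Finset.prod_le_pow_card
    intro p hp
    rw [Nat.centralBinom_eq_two_mul_choose]
    exact Nat.pow_factorization_choose_le h2m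
  refine step1.trans (Nat.pow_le_pow_right (by omega) ?_)
  calc (Nat.centralBinom m).factorization.support.card
      ≤ (Nat.primesBelow (2 * m + 1)).card := Finset.card_le_card hsub
    _ = Nat.primeCounting' (2 * m + 1) := Nat.primesBelow_card_eq_primeCounting' _
    _ = Nat.primeCounting (2 * m) := rfl

private lemma orbit_cheb3 (m : ℕ) (hm : 4 ≤ m) :
    (2 * m : ℝ) * Real.log 2 ≤ (Nat.primeCounting (2 * m) + 1) * Real.log (2 * m) := by
  have hc2 : (4 : ℕ) ^ m ≤ (2 * m) ^ (Nat.primeCounting (2 * m) + 1) := by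
    calc (4:ℕ) ^ m ≤ m * Nat.centralBinom m := (Nat.four_pow_lt_mul_centralBinom m hm).le
      _ ≤ (2 * m) * (2 * m) ^ (Nat.primeCounting (2 * m)) :=
          Nat.mul_le_mul (by omega) (orbit_cheb1 m (by omega))
      _ = (2 * m) ^ (Nat.primeCounting (2 * m) + 1) := (pow_succ' _ _).symm
  have h1 : ((4:ℕ) ^ m : ℝ) ≤ ((2 * m : ℕ) ^ (Nat.primeCounting (2 * m) + 1) : ℝ) := by
    exact_mod_cast hc2
  have h2 := Real.log_le_log (by positivity) h1
  rw [Real.log_pow, Real.log_pow] at h2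
  have h4 : Real.log 4 = 2 * Real.log 2 := by
    rw [show (4:ℝ) = 2 ^ 2 by norm_num, Real.log_pow]; push_cast; ring
  push_cast at h2 ⊢
  rw [h4] at h2
  nlinarith [h2]

private lemma orbit_primes_ncard (x : ℝ) (hx : 0 ≤ x) :
    {p : ℕ | p.Prime ∧ (p : ℝ) ≤ x}.ncard = Nat.primeCounting ⌊x⌋₊ := by
  have hset : {p : ℕ | p.Prime ∧ (p : ℝ) ≤ x} =
      ↑((Finset.range (⌊x⌋₊ + 1)).filter Nat.Prime) := by
    ext p
    simp only [Set.mem_setOf_eq, Finset.coe_filter, Finset.mem_range, Nat.lt_succ_iff,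
      Set.mem_setOf_eq]
    rw [Nat.le_floor_iff hx]
    tauto
  rw [hset, Set.ncard_coe_finset]
  rw [Nat.primeCounting, Nat.primeCounting', Nat.count_eq_card_filter_range]

private lemma orbit_cheb_real (x : ℝ) (hx : 8 ≤ x) :
    (x - 2) * Real.log 2 ≤ ((Nat.primeCounting ⌊x⌋₊ : ℝ) + 1) * Real.log x := by
  have hx0 : (0:ℝ) ≤ x := by linarith
  set N := ⌊x⌋₊ with hN
  have hN8 : 8 ≤ N := Nat.le_floor (by exact_mod_cast hx)
  set m := N / 2 with hm
  have hm4 : 4 ≤ m := by omega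
  have h2mN : 2 * m ≤ N := by omega
  have hN2m : N ≤ 2 * m + 1 := by omega
  have hNx : (N : ℝ) ≤ x := Nat.floor_le hx0
  have hxN : x < N + 1 := Nat.lt_floor_add_one x
  have key := orbit_cheb3 m hm4
  have hlog2 : (0:ℝ) < Real.log 2 := Real.log_pos (by norm_num)
  have h2mx : (2 * m : ℝ) ≤ x := by
    calc (2 * m : ℝ) ≤ (N : ℝ) := by exact_mod_cast h2mN
      _ ≤ x := hNx
  have hx2m : x - 2 ≤ (2 * m : ℝ) := by
    have : (N : ℝ) ≤ 2 * m + 1 := by exact_mod_cast hN2m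
    linarith
  have hlogle : Real.log (2 * m : ℝ) ≤ Real.log x := by
    apply Real.log_le_log (by positivity) h2mx
  have hmono : (Nat.primeCounting (2 * m) : ℝ) ≤ (Nat.primeCounting N : ℝ) := by
    exact_mod_cast Nat.monotone_primeCounting h2mN
  have hp1 : (0:ℝ) ≤ (Nat.primeCounting (2 * m) : ℝ) + 1 := by positivity
  have hlogx0 : 0 ≤ Real.log x := Real.log_nonneg (by linarith)
  calc (x - 2) * Real.log 2 ≤ (2 * m : ℝ) * Real.log 2 := by
        apply mul_le_mul_of_nonneg_right hx2m hlog2.le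
    _ ≤ ((Nat.primeCounting (2 * m) : ℝ) + 1) * Real.log (2 * m : ℝ) := by
        have := key; push_cast at this ⊢; linarith
    _ ≤ ((Nat.primeCounting (2 * m) : ℝ) + 1) * Real.log x :=
        mul_le_mul_of_nonneg_left hlogle hp1
    _ ≤ ((Nat.primeCounting N : ℝ) + 1) * Real.log x := by
        apply mul_le_mul_of_nonneg_right _ hlogx0
        linarith

private lemma orbit_pf_card (M : ℕ) (hM : M ≠ 0) :
    (M.primeFactors.card : ℝ) * Real.log 2 ≤ Real.log M := by
  have h1 : 2 ^ M.primeFactors.card ≤ ∏ p ∈ M.primeFactors, p :=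
    Finset.pow_card_le_prod _ _ _ (fun p hp => (Nat.prime_of_mem_primeFactors hp).two_le)
  have h2 : 2 ^ M.primeFactors.card ≤ M :=
    h1.trans (Nat.le_of_dvd (Nat.pos_of_ne_zero hM) (Nat.prod_primeFactors_dvd M))
  have h3 : ((2:ℕ) ^ M.primeFactors.card : ℝ) ≤ (M : ℝ) := by exact_mod_cast h2
  have h4 := Real.log_le_log (by positivity) h3
  rw [Real.log_pow] at h4
  norm_num at h4
  exact_mod_cast h4

set_option maxHeartbeats 1000000 in
/-- Orbits modulo `p` in arithmetic dynamics: if the forward orbit of `P` under the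
polynomial map `φ` is infinite and the heights along the orbit grow at most like
`d^i`, then for any `ε < 1/log d`, for a density-one set of primes the orbit of `P`
modulo `p` has length at least `ε log p`. -/
theorem stmt_11 (n : ℕ) (hn : 1 ≤ n) (F : Fin n → MvPolynomial (Fin n) ℤ)
    (P : Fin n → ℤ)
    (horb : (Set.range fun m : ℕ => (polyMap F)^[m] P).Infinite)
    (d c : ℝ) (hd : 1 < d) (hc : 0 ≤ c)
    (hgrowth : ∀ i : ℕ,
      Real.log (max 1 (⨆ j : Fin n, (|((polyMap F)^[i] P) j| : ℝ))) ≤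
        d ^ i * (Real.log (max 1 (⨆ j : Fin n, (|P j| : ℝ))) + c))
    (ε : ℝ) (hε0 : 0 < ε) (hε : ε < 1 / Real.log d) :
    Filter.Tendsto (fun x : ℝ =>
      (Set.ncard {p : ℕ | p.Prime ∧ (p : ℝ) ≤ x ∧
          ε * Real.log p ≤
            (Set.ncard (Set.range fun m : ℕ =>
              (polyMap fun i => (F i).map (Int.castRingHom (ZMod p)))^[m]
                fun j => ((P j : ZMod p))) : ℝ)} : ℝ) /
        (Set.ncard {p : ℕ | p.Prime ∧ (p : ℝ) ≤ x} : ℝ))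
      Filter.atTop (nhds 1) := by
  classical
  have hL : 0 < Real.log d := Real.log_pos hd
  have hθ1 : ε * Real.log d < 1 := (lt_div_iff₀ hL).mp hε
  have hθ0 : 0 < ε * Real.log d := mul_pos hε0 hL
  set θ := ε * Real.log d with hθ
  set δ := (1 - θ) / 8 with hδ
  have hδ0 : 0 < δ := by rw [hδ]; linarith
  haveI : Nonempty (Fin n) := ⟨⟨0, hn⟩⟩
  set H := Real.log (max 1 (⨆ j : Fin n, (|P j| : ℝ))) with hH
  have hH0 : 0 ≤ H := Real.log_nonneg (le_max_left _ _)
  have hHc0 : 0 ≤ H + c := by linarith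
  have hd0 : (0:ℝ) < d := lt_trans one_pos hd
  have hlog2 : (0:ℝ) < Real.log 2 := Real.log_pos (by norm_num)
  -- coordinate bound
  have habs : ∀ (m : ℕ) (i : Fin n),
      (|((polyMap F)^[m] P) i| : ℝ) ≤ Real.exp (d ^ m * (H + c)) := by
    intro m i
    have h1 : (|((polyMap F)^[m] P) i| : ℝ) ≤
        ⨆ j : Fin n, (|((polyMap F)^[m] P) j| : ℝ) :=
      le_ciSup (f := fun j : Fin n => (|((polyMap F)^[m] P) j| : ℝ))
        (Set.Finite.bddAbove (Set.finite_range _)) i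
    have h2 : (⨆ j : Fin n, (|((polyMap F)^[m] P) j| : ℝ)) ≤
        max 1 (⨆ j : Fin n, (|((polyMap F)^[m] P) j| : ℝ)) := le_max_right _ _
    have hpos : (0:ℝ) < max 1 (⨆ j : Fin n, (|((polyMap F)^[m] P) j| : ℝ)) :=
      lt_of_lt_of_le one_pos (le_max_left _ _)
    calc (|((polyMap F)^[m] P) i| : ℝ)
        ≤ max 1 (⨆ j : Fin n, (|((polyMap F)^[m] P) j| : ℝ)) := h1.trans h2
      _ = Real.exp (Real.log (max 1 (⨆ j : Fin n, (|((polyMap F)^[m] P) j| : ℝ)))) :=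
          (Real.exp_log hpos).symm
      _ ≤ Real.exp (d ^ m * (H + c)) := Real.exp_le_exp.mpr (hgrowth m)
  have hinj : Function.Injective (fun m : ℕ => (polyMap F)^[m] P) := orbit_iter_inj horb
  have hpick : ∀ j k : ℕ, ∃ i : Fin n,
      j ≠ k → ((polyMap F)^[j] P) i ≠ ((polyMap F)^[k] P) i := by
    intro j k
    by_cases h : j = k
    · exact ⟨⟨0, hn⟩, fun hc' => absurd h hc'⟩
    · have hne : (polyMap F)^[j] P ≠ (polyMap F)^[k] P := fun he => h (hinj he)
      obtain ⟨i, hi⟩ := Function.ne_iff.mp hne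
      exact ⟨i, fun _ => hi⟩
  choose idx hidx using hpick
  set N : ℕ → ℕ → ℤ := fun j k =>
    ((polyMap F)^[k] P) (idx j k) - ((polyMap F)^[j] P) (idx j k) with hNdef
  have hN0 : ∀ j k, j ≠ k → N j k ≠ 0 := by
    intro j k hjk
    simp only [hNdef]
    exact sub_ne_zero_of_ne (Ne.symm (hidx j k hjk))
  -- log bound on differences
  have hNlog : ∀ (Kn j k : ℕ), j ≤ Kn → k ≤ Kn →
      Real.log ((N j k).natAbs : ℝ) ≤ Real.log 2 + d ^ Kn * (H + c) := by
    intro Kn j k hj hk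
    have hexp : ∀ m : ℕ, m ≤ Kn →
        (|((polyMap F)^[m] P) (idx j k)| : ℝ) ≤ Real.exp (d ^ Kn * (H + c)) := by
      intro m hm
      refine (habs m _).trans (Real.exp_le_exp.mpr ?_)
      exact mul_le_mul_of_nonneg_right (pow_le_pow_right₀ hd.le hm) hHc0
    have habs2 : ((N j k).natAbs : ℝ) ≤ 2 * Real.exp (d ^ Kn * (H + c)) := by
      rw [Nat.cast_natAbs]
      simp only [hNdef]
      push_cast
      have hT1 := hexp k hk
      have hT2 := hexp j hj
      push_cast at hT1 hT2
      calc |(((polyMap F)^[k] P) (idx j k) : ℝ) - (((polyMap F)^[j] P) (idx j k) : ℝ)|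
          ≤ |(((polyMap F)^[k] P) (idx j k) : ℝ)| + |(((polyMap F)^[j] P) (idx j k) : ℝ)| :=
            abs_sub _ _
        _ ≤ 2 * Real.exp (d ^ Kn * (H + c)) := by linarith
    rcases eq_or_ne ((N j k).natAbs) 0 with h0 | h0
    · rw [h0]
      simp only [Nat.cast_zero, Real.log_zero]
      have : 0 ≤ d ^ Kn * (H + c) := mul_nonneg (by positivity) hHc0
      linarith
    · have hpos : (0:ℝ) < ((N j k).natAbs : ℝ) := by
        exact_mod_cast Nat.pos_of_ne_zero h0
      calc Real.log ((N j k).natAbs : ℝ)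
          ≤ Real.log (2 * Real.exp (d ^ Kn * (H + c))) := Real.log_le_log hpos habs2
        _ = Real.log 2 + d ^ Kn * (H + c) := by
            rw [Real.log_mul two_ne_zero (Real.exp_ne_zero _), Real.log_exp]
  set mp : ℕ → ℕ := fun p => Set.ncard (Set.range fun m : ℕ =>
      (polyMap fun i => (F i).map (Int.castRingHom (ZMod p)))^[m]
        fun j => ((P j : ZMod p))) with hmp
  set Pri : ℝ → Set ℕ := fun x => {p : ℕ | p.Prime ∧ (p : ℝ) ≤ x} with hPri
  set Bad : ℝ → Set ℕ := fun x =>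
    {p : ℕ | p.Prime ∧ (p : ℝ) ≤ x ∧ ¬ (ε * Real.log p ≤ (mp p : ℝ))} with hBad
  set K : ℝ → ℕ := fun x => ⌊ε * Real.log x⌋₊ with hK
  set T : ℝ → Finset ℕ := fun x =>
    (Finset.range (K x + 1) ×ˢ Finset.range (K x + 1)).biUnion
      (fun q => ((N q.1 q.2).natAbs).primeFactors) with hT
  have hPfin : ∀ x : ℝ, 0 ≤ x → (Pri x).Finite := by
    intro x hx
    apply Set.Finite.subset (Set.finite_Iic ⌊x⌋₊)
    intro p hp
    exact Set.mem_Iic.mpr (Nat.le_floor hp.2)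
  have hBadPri : ∀ x : ℝ, Bad x ⊆ Pri x := by
    intro x p hp
    exact ⟨hp.1, hp.2.1⟩
  -- pigeonhole: bad primes divide a difference
  have hBadT : ∀ x : ℝ, 1 ≤ x → Bad x ⊆ ↑(T x) := by
    intro x hx1 p hp
    obtain ⟨hpp, hpx, hcond⟩ := hp
    have hppos : 0 < p := hpp.pos
    haveI : NeZero p := ⟨hppos.ne'⟩
    have hmpK : mp p ≤ K x := by
      rw [hK]
      apply Nat.le_floor
      have h1 : (mp p : ℝ) ≤ ε * Real.log p := (not_le.mp hcond).le
      have h2 : Real.log p ≤ Real.log x :=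
        Real.log_le_log (by exact_mod_cast hppos) hpx
      calc (mp p : ℝ) ≤ ε * Real.log p := h1
        _ ≤ ε * Real.log x := mul_le_mul_of_nonneg_left h2 hε0.le
    set S := Set.range fun m : ℕ =>
      (polyMap fun i => (F i).map (Int.castRingHom (ZMod p)))^[m]
        fun j => ((P j : ZMod p)) with hS
    haveI : Fintype ↥S := (Set.toFinite S).fintype
    have hcardS : Fintype.card ↥S = mp p := by
      rw [hmp]
      simp only
      rw [Set.ncard_eq_toFinset_card' S, Set.toFinset_card]
    have hlt : Fintype.card ↥S < Fintype.card (Fin (K x + 1)) := by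
      rw [Fintype.card_fin, hcardS]
      omega
    set g : Fin (K x + 1) → ↥S := fun a =>
      ⟨(polyMap fun i => (F i).map (Int.castRingHom (ZMod p)))^[(a : ℕ)]
        fun j => ((P j : ZMod p)), Set.mem_range_self (a : ℕ)⟩ with hg
    obtain ⟨a, b, hab, hgab⟩ := Fintype.exists_ne_map_eq_of_card_lt g hlt
    have hvals : (polyMap fun i => (F i).map (Int.castRingHom (ZMod p)))^[(a : ℕ)]
        (fun j => ((P j : ZMod p))) =
        (polyMap fun i => (F i).map (Int.castRingHom (ZMod p)))^[(b : ℕ)]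
        (fun j => ((P j : ZMod p))) := by
      have := congrArg Subtype.val hgab
      simpa [hg] using this
    have hfe : (fun j => (((polyMap F)^[(a : ℕ)] P j : ℤ) : ZMod p)) =
        fun j => (((polyMap F)^[(b : ℕ)] P j : ℤ) : ZMod p) := by
      rw [orbit_redIter, orbit_redIter]
      exact hvals
    have hco := congrFun hfe (idx (a : ℕ) (b : ℕ))
    have hdvd : (p : ℤ) ∣ N (a : ℕ) (b : ℕ) := by
      simp only [hNdef]
      exact (ZMod.intCast_eq_intCast_iff_dvd_sub _ _ p).mp hco
    have hne : (a : ℕ) ≠ (b : ℕ) := fun h => hab (Fin.val_injective h)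
    have hmem : p ∈ T x := by
      rw [hT]
      refine Finset.mem_biUnion.mpr ⟨((a : ℕ), (b : ℕ)),
        Finset.mem_product.mpr ⟨Finset.mem_range.mpr a.isLt, Finset.mem_range.mpr b.isLt⟩, ?_⟩
      exact Nat.mem_primeFactors.mpr ⟨hpp, Int.natCast_dvd.mp hdvd,
        Int.natAbs_ne_zero.mpr (hN0 _ _ hne)⟩
    exact hmem
  -- cardinality bound for T
  have hTcard : ∀ x : ℝ,
      ((T x).card : ℝ) * Real.log 2 ≤
        ((K x : ℝ) + 1) ^ 2 * (Real.log 2 + d ^ (K x) * (H + c)) := by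
    intro x
    have h1 : (T x).card ≤
        ∑ q ∈ Finset.range (K x + 1) ×ˢ Finset.range (K x + 1),
          ((N q.1 q.2).natAbs).primeFactors.card := by
      rw [hT]
      exact Finset.card_biUnion_le
    have h2 : ((T x).card : ℝ) ≤
        ∑ q ∈ Finset.range (K x + 1) ×ˢ Finset.range (K x + 1),
          (((N q.1 q.2).natAbs).primeFactors.card : ℝ) := by
      exact_mod_cast h1
    have h3 : ∀ q ∈ Finset.range (K x + 1) ×ˢ Finset.range (K x + 1),
        (((N q.1 q.2).natAbs).primeFactors.card : ℝ) * Real.log 2 ≤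
          Real.log 2 + d ^ (K x) * (H + c) := by
      rintro ⟨j, k⟩ hq
      rw [Finset.mem_product, Finset.mem_range, Finset.mem_range] at hq
      rcases eq_or_ne ((N j k).natAbs) 0 with h0 | h0
      · rw [h0]
        simp only [Nat.primeFactors_zero, Finset.card_empty, Nat.cast_zero, zero_mul]
        have : 0 ≤ d ^ (K x) * (H + c) := mul_nonneg (by positivity) hHc0
        linarith
      · refine (orbit_pf_card _ h0).trans ?_
        exact hNlog (K x) j k (by omega) (by omega)
    calc ((T x).card : ℝ) * Real.log 2
        ≤ (∑ q ∈ Finset.range (K x + 1) ×ˢ Finset.range (K x + 1),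
            (((N q.1 q.2).natAbs).primeFactors.card : ℝ)) * Real.log 2 :=
          mul_le_mul_of_nonneg_right h2 hlog2.le
      _ = ∑ q ∈ Finset.range (K x + 1) ×ˢ Finset.range (K x + 1),
            (((N q.1 q.2).natAbs).primeFactors.card : ℝ) * Real.log 2 :=
          Finset.sum_mul _ _ _
      _ ≤ ∑ _q ∈ Finset.range (K x + 1) ×ˢ Finset.range (K x + 1),
            (Real.log 2 + d ^ (K x) * (H + c)) := Finset.sum_le_sum h3
      _ = ((K x : ℝ) + 1) ^ 2 * (Real.log 2 + d ^ (K x) * (H + c)) := by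
          rw [Finset.sum_const, Finset.card_product, Finset.card_range, nsmul_eq_mul]
          push_cast
          ring
  -- analytic estimates
  have hlog_le : ∀ C : ℝ, 0 < C → ∀ᶠ x : ℝ in Filter.atTop, Real.log x ≤ C * x ^ δ := by
    intro C hC
    filter_upwards [(isLittleO_log_rpow_atTop hδ0).def hC,
      Filter.eventually_ge_atTop (1:ℝ)] with x h1 hx1
    have h2 : |x ^ δ| = x ^ δ := abs_of_nonneg (Real.rpow_nonneg (by linarith) δ)
    rw [Real.norm_eq_abs, Real.norm_eq_abs, h2] at h1
    exact (le_abs_self _).trans h1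
  have ev_xδ2 : ∀ᶠ x : ℝ in Filter.atTop, (2:ℝ) ≤ x ^ δ :=
    (tendsto_rpow_atTop hδ0).eventually_ge_atTop 2
  have ev_K : ∀ᶠ x : ℝ in Filter.atTop, ((K x : ℝ) + 1) ≤ x ^ δ := by
    filter_upwards [hlog_le (1/(2*(ε+1))) (by positivity), ev_xδ2,
      Filter.eventually_ge_atTop (1:ℝ)] with x hl h2 hx1
    have hlx : 0 ≤ Real.log x := Real.log_nonneg hx1
    have hKle : (K x : ℝ) ≤ ε * Real.log x := by
      rw [hK]; exact Nat.floor_le (by positivity)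
    have hfrac : ε * (1/(2*(ε+1))) ≤ 1/2 := by
      rw [mul_one_div, div_le_div_iff₀ (by positivity) (by norm_num)]
      nlinarith
    have h3 : ε * Real.log x ≤ (1/2) * x ^ δ := by
      calc ε * Real.log x ≤ ε * ((1/(2*(ε+1))) * x ^ δ) :=
            mul_le_mul_of_nonneg_left hl hε0.le
        _ = (ε * (1/(2*(ε+1)))) * x ^ δ := by ring
        _ ≤ (1/2) * x ^ δ := mul_le_mul_of_nonneg_right hfrac
            (Real.rpow_nonneg (by linarith) δ)
    linarith
  have ev_dK : ∀ᶠ x : ℝ in Filter.atTop, d ^ (K x) ≤ x ^ θ := by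
    filter_upwards [Filter.eventually_ge_atTop (1:ℝ)] with x hx1
    have hx0 : (0:ℝ) < x := lt_of_lt_of_le one_pos hx1
    have hlx : 0 ≤ Real.log x := Real.log_nonneg hx1
    have hKle : (K x : ℝ) ≤ ε * Real.log x := by
      rw [hK]; exact Nat.floor_le (by positivity)
    have he : (d : ℝ) ^ (K x) = Real.exp ((K x) * Real.log d) := by
      rw [← Real.log_pow, Real.exp_log (pow_pos hd0 _)]
    rw [he, Real.rpow_def_of_pos hx0]
    apply Real.exp_le_exp.mpr
    have h1 : (K x : ℝ) * Real.log d ≤ (ε * Real.log x) * Real.log d :=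
      mul_le_mul_of_nonneg_right hKle hL.le
    calc (K x : ℝ) * Real.log d ≤ (ε * Real.log x) * Real.log d := h1
      _ = Real.log x * θ := by rw [hθ]; ring
  set C1 := (Real.log 2 + H + c)/Real.log 2 with hC1
  have hC1pos : 0 < C1 := div_pos (by linarith) hlog2
  have ev_Bad : ∀ᶠ x : ℝ in Filter.atTop,
      ((Bad x).ncard : ℝ) ≤ C1 * x ^ (θ + 2*δ) := by
    filter_upwards [ev_K, ev_dK, Filter.eventually_ge_atTop (1:ℝ)] with x hK1 hdK hx1
    have hx0 : (0:ℝ) < x := by linarith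
    have hxθ1 : (1:ℝ) ≤ x ^ θ := Real.one_le_rpow hx1 hθ0.le
    have hBc : ((Bad x).ncard : ℝ) ≤ ((T x).card : ℝ) := by
      have h := Set.ncard_le_ncard (hBadT x hx1) (Finset.finite_toSet (T x))
      rw [Set.ncard_coe_finset] at h
      exact_mod_cast h
    have hKsq : ((K x : ℝ)+1)^2 ≤ (x^δ)^2 :=
      pow_le_pow_left₀ (by positivity) hK1 2
    have h2 : Real.log 2 + d ^ (K x) * (H+c) ≤ x ^ θ * (Real.log 2 + H + c) := by
      have hm : d ^ (K x) * (H + c) ≤ x ^ θ * (H + c) :=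
        mul_le_mul_of_nonneg_right hdK hHc0
      nlinarith [hxθ1, hlog2]
    have hTnn : (0:ℝ) ≤ Real.log 2 + d ^ (K x) * (H + c) := by
      have : 0 ≤ d ^ (K x) * (H + c) := mul_nonneg (by positivity) hHc0
      linarith
    have h3 : ((Bad x).ncard : ℝ) * Real.log 2 ≤ (x^δ)^2 * (x^θ * (Real.log 2 + H + c)) := by
      calc ((Bad x).ncard : ℝ) * Real.log 2 ≤ ((T x).card : ℝ) * Real.log 2 :=
            mul_le_mul_of_nonneg_right hBc hlog2.le
        _ ≤ ((K x : ℝ) + 1) ^ 2 * (Real.log 2 + d ^ (K x) * (H + c)) := hTcard x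
        _ ≤ (x^δ)^2 * (x ^ θ * (Real.log 2 + H + c)) := by
            apply mul_le_mul hKsq h2 hTnn (by positivity)
    have h4 : (x^δ)^2 * x^θ = x^(θ+2*δ) := by
      rw [sq, ← Real.rpow_add hx0, ← Real.rpow_add hx0]
      ring_nf
    have hC1e : C1 * Real.log 2 = Real.log 2 + H + c :=
      div_mul_cancel₀ _ hlog2.ne'
    have h5 : ((Bad x).ncard : ℝ) * Real.log 2 ≤ (C1 * x^(θ+2*δ)) * Real.log 2 := by
      calc ((Bad x).ncard : ℝ) * Real.log 2
          ≤ (x^δ)^2 * (x^θ * (Real.log 2 + H + c)) := h3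
        _ = ((x^δ)^2 * x^θ) * (C1 * Real.log 2) := by rw [hC1e]; ring
        _ = (C1 * x^(θ+2*δ)) * Real.log 2 := by rw [h4]; ring
    exact le_of_mul_le_mul_right h5 hlog2
  have ev_Pri : ∀ᶠ x : ℝ in Filter.atTop, x ^ (θ + 3*δ) ≤ ((Pri x).ncard : ℝ) := by
    have hu1 : θ + 4*δ < 1 := by rw [hδ]; linarith
    have hpow : Filter.Tendsto (fun x : ℝ => x ^ (-(1 - (θ+4*δ)))) Filter.atTop (nhds 0) :=
      tendsto_rpow_neg_atTop (by linarith)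
    have ev_small : ∀ᶠ x : ℝ in Filter.atTop, x ^ (-(1-(θ+4*δ))) < Real.log 2 / 8 :=
      hpow.eventually_lt_const (by positivity)
    filter_upwards [hlog_le 1 one_pos, ev_small, Filter.eventually_ge_atTop (8:ℝ)]
      with x hlx hsm hx8
    have hx1 : (1:ℝ) ≤ x := by linarith
    have hx0 : (0:ℝ) < x := by linarith
    have hlogx : 0 < Real.log x := Real.log_pos (by linarith)
    have hs0 : 0 ≤ θ + 3*δ := by positivity
    have hs1 : (1:ℝ) ≤ x ^ (θ+3*δ) := Real.one_le_rpow hx1 hs0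
    have hlx' : Real.log x ≤ x ^ δ := by linarith [hlx]
    have e2 : x^(θ+3*δ) * x^δ = x^(θ+4*δ) := by
      rw [← Real.rpow_add hx0]; ring_nf
    have e3 : x^(-(1-(θ+4*δ))) * x = x^(θ+4*δ) := by
      calc x^(-(1-(θ+4*δ))) * x = x^(-(1-(θ+4*δ))) * x^(1:ℝ) := by rw [Real.rpow_one]
        _ = x^(-(1-(θ+4*δ)) + 1) := (Real.rpow_add hx0 _ _).symm
        _ = x^(θ+4*δ) := by ring_nf
    have e4 : x^(θ+4*δ) ≤ (Real.log 2/8) * x := by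
      rw [← e3]
      exact mul_le_mul_of_nonneg_right hsm.le hx0.le
    have e1 : (x^(θ+3*δ)+1) * Real.log x ≤ 2 * (x^(θ+3*δ) * x^δ) := by
      have hxs := Real.rpow_nonneg hx0.le (θ+3*δ)
      have hxd : (1:ℝ) ≤ x ^ δ := Real.one_le_rpow hx1 hδ0.le
      nlinarith [hlogx.le]
    have hkey : (x ^ (θ+3*δ) + 1) * Real.log x ≤ (x - 2) * Real.log 2 := by
      rw [e2] at e1
      nlinarith [e1, e4, hlog2, hx8]
    have cheb := orbit_cheb_real x (by linarith)
    have hprieq : ((Pri x).ncard : ℝ) = (Nat.primeCounting ⌊x⌋₊ : ℝ) := by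
      rw [hPri]
      exact_mod_cast congrArg Nat.cast (orbit_primes_ncard x (by linarith))
    rw [← hprieq] at cheb
    have h5 : (x ^ (θ+3*δ) + 1) * Real.log x ≤ (((Pri x).ncard : ℝ) + 1) * Real.log x :=
      hkey.trans cheb
    have h6 : x ^ (θ+3*δ) + 1 ≤ ((Pri x).ncard : ℝ) + 1 :=
      le_of_mul_le_mul_right h5 hlogx
    linarith
  -- final assembly
  have hzero : Filter.Tendsto (fun x : ℝ => ((Bad x).ncard : ℝ)/((Pri x).ncard : ℝ))
      Filter.atTop (nhds 0) := by
    apply tendsto_of_tendsto_of_tendsto_of_le_of_le' tendsto_const_nhds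
      (a := (0:ℝ))
      (h := fun x => C1 * x ^ (-δ))
    · have h := (tendsto_rpow_neg_atTop hδ0).const_mul C1
      simpa using h
    · exact Filter.Eventually.of_forall fun x =>
        div_nonneg (Nat.cast_nonneg _) (Nat.cast_nonneg _)
    · filter_upwards [ev_Bad, ev_Pri, Filter.eventually_ge_atTop (1:ℝ)] with x hB hP hx1
      have hx0 : (0:ℝ) < x := by linarith
      have hps : (0:ℝ) < x ^ (θ + 3*δ) := Real.rpow_pos_of_pos hx0 _
      have hq : ((Bad x).ncard : ℝ)/((Pri x).ncard : ℝ) ≤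
          (C1 * x ^ (θ+2*δ)) / (x ^ (θ+3*δ)) :=
        div_le_div₀ (by positivity) hB hps hP
      have heq : (C1 * x ^ (θ+2*δ)) / (x ^ (θ+3*δ)) = C1 * x ^ (-δ) := by
        rw [mul_div_assoc, ← Real.rpow_sub hx0]
        congr 2
        ring
      rw [heq] at hq
      exact hq
  have hEq : ∀ᶠ x : ℝ in Filter.atTop,
      (Set.ncard {p : ℕ | p.Prime ∧ (p : ℝ) ≤ x ∧
          ε * Real.log p ≤
            (Set.ncard (Set.range fun m : ℕ =>
              (polyMap fun i => (F i).map (Int.castRingHom (ZMod p)))^[m]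
                fun j => ((P j : ZMod p))) : ℝ)} : ℝ) /
        (Set.ncard {p : ℕ | p.Prime ∧ (p : ℝ) ≤ x} : ℝ) =
      1 - ((Bad x).ncard : ℝ)/((Pri x).ncard : ℝ) := by
    filter_upwards [ev_Pri, Filter.eventually_ge_atTop (8:ℝ)] with x hP hx8
    have hx0 : (0:ℝ) ≤ x := by linarith
    have hx1 : (1:ℝ) ≤ x := by linarith
    have hps : (1:ℝ) ≤ x ^ (θ + 3*δ) := Real.one_le_rpow hx1 (by positivity)
    have hPc0 : (0:ℝ) < ((Pri x).ncard : ℝ) := by linarith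
    have hNuSet : {p : ℕ | p.Prime ∧ (p : ℝ) ≤ x ∧
          ε * Real.log p ≤
            (Set.ncard (Set.range fun m : ℕ =>
              (polyMap fun i => (F i).map (Int.castRingHom (ZMod p)))^[m]
                fun j => ((P j : ZMod p))) : ℝ)} = Pri x \ Bad x := by
      ext p
      simp only [hPri, hBad, hmp, Set.mem_setOf_eq, Set.mem_diff]
      tauto
    have hdiff : (Pri x \ Bad x).ncard = (Pri x).ncard - (Bad x).ncard :=
      Set.ncard_diff (hBadPri x) ((hPfin x hx0).subset (hBadPri x))
    have hle : (Bad x).ncard ≤ (Pri x).ncard :=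
      Set.ncard_le_ncard (hBadPri x) (hPfin x hx0)
    rw [hNuSet, hdiff]
    rw [Nat.cast_sub hle]
    rw [sub_div, div_self hPc0.ne']
  have h1 : Filter.Tendsto (fun x : ℝ => 1 - ((Bad x).ncard : ℝ)/((Pri x).ncard : ℝ))
      Filter.atTop (nhds (1 - 0)) := tendsto_const_nhds.sub hzero
  rw [sub_zero] at h1
  exact Filter.Tendsto.congr' (hEq.mono fun x hx => hx.symm) h1
end

section
/- There exists a constant c > 0 such that for every prime ℓ ≥ 5 and every d ∈ 𝔽_ℓ^× the following hold, where s := |SL₂(𝔽_ℓ)| = ℓ(ℓ−1)(ℓ+1): (1) |#{A ∈ GL₂(𝔽_ℓ) : det(A) = d and A ∈ C₁(ℓ)} − s/2| ≤ c·s/ℓ; (2) |#{A ∈ GL₂(𝔽_ℓ) : det(A) = d and A ∈ C₂(ℓ)} − s/2| ≤ c·s/ℓ; (3) |#{A ∈ GL₂(𝔽_ℓ) : det(A) = d and A ∈ C₃(ℓ)} − s| ≤ c·s/ℓ. -/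
/-- `C₁(ℓ)`: matrices `A ∈ GL₂(𝔽_ℓ)` with `tr(A)² − 4 det(A)` a nonzero square and
`tr(A) ≠ 0`. -/
def serreC1 (ℓ : ℕ) : Set (Matrix.GeneralLinearGroup (Fin 2) (ZMod ℓ)) :=
  {A | (∃ y : ZMod ℓ, y ≠ 0 ∧
      Matrix.trace (A : Matrix (Fin 2) (Fin 2) (ZMod ℓ)) ^ 2 -
        4 * Matrix.det (A : Matrix (Fin 2) (Fin 2) (ZMod ℓ)) = y ^ 2) ∧
    Matrix.trace (A : Matrix (Fin 2) (Fin 2) (ZMod ℓ)) ≠ 0}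

/-- `C₂(ℓ)`: matrices `A ∈ GL₂(𝔽_ℓ)` with `tr(A)² − 4 det(A)` not a square and
`tr(A) ≠ 0`. -/
def serreC2 (ℓ : ℕ) : Set (Matrix.GeneralLinearGroup (Fin 2) (ZMod ℓ)) :=
  {A | (¬ ∃ y : ZMod ℓ,
      Matrix.trace (A : Matrix (Fin 2) (Fin 2) (ZMod ℓ)) ^ 2 -
        4 * Matrix.det (A : Matrix (Fin 2) (Fin 2) (ZMod ℓ)) = y ^ 2) ∧
    Matrix.trace (A : Matrix (Fin 2) (Fin 2) (ZMod ℓ)) ≠ 0}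

/-- `C₃(ℓ)`: matrices `A ∈ GL₂(𝔽_ℓ)` such that `u := tr(A)²/det(A)` avoids
`0, 1, 2, 4` and `u² − 3u + 1 ≠ 0`. -/
def serreC3 (ℓ : ℕ) : Set (Matrix.GeneralLinearGroup (Fin 2) (ZMod ℓ)) :=
  {A | Matrix.trace (A : Matrix (Fin 2) (Fin 2) (ZMod ℓ)) ^ 2 *
        (Matrix.det (A : Matrix (Fin 2) (Fin 2) (ZMod ℓ)))⁻¹ ≠ 0 ∧
    Matrix.trace (A : Matrix (Fin 2) (Fin 2) (ZMod ℓ)) ^ 2 *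
        (Matrix.det (A : Matrix (Fin 2) (Fin 2) (ZMod ℓ)))⁻¹ ≠ 1 ∧
    Matrix.trace (A : Matrix (Fin 2) (Fin 2) (ZMod ℓ)) ^ 2 *
        (Matrix.det (A : Matrix (Fin 2) (Fin 2) (ZMod ℓ)))⁻¹ ≠ 2 ∧
    Matrix.trace (A : Matrix (Fin 2) (Fin 2) (ZMod ℓ)) ^ 2 *
        (Matrix.det (A : Matrix (Fin 2) (Fin 2) (ZMod ℓ)))⁻¹ ≠ 4 ∧
    (Matrix.trace (A : Matrix (Fin 2) (Fin 2) (ZMod ℓ)) ^ 2 *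
        (Matrix.det (A : Matrix (Fin 2) (Fin 2) (ZMod ℓ)))⁻¹) ^ 2 -
      3 * (Matrix.trace (A : Matrix (Fin 2) (Fin 2) (ZMod ℓ)) ^ 2 *
        (Matrix.det (A : Matrix (Fin 2) (Fin 2) (ZMod ℓ)))⁻¹) + 1 ≠ 0}

/-
The number of `2 × 2` matrices over `𝔽_q` with trace `t` and determinant `d` is `q² + (r - 1) q`,
where `r ≤ 2` is the number of roots of `X² - t X + d`: fixing the diagonal `(a, t - a)` leaves
`b c = a (t - a) - d`, which has `q - 1` solutions, or `2 q - 1` when the right side vanishes.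
So each fibre count is, up to `q²`, `q²` times the number of admissible traces, and these are
counted directly. For `C₁`, the substitution `u = t - y`, `v = t + y` turns `t² - 4d = y²`,
`y ≠ 0` into `u v = 4d`, `u ≠ v`, which has `q - 1` solutions up to the diagonal, and each such `t`
carries exactly two `y`; so about `q / 2` traces qualify, and the rest (up to `O(1)`) belong to
`C₂`. For `C₃` only the at most `12` traces with `t² / d` among `0, 1, 2, 4` and the roots of
`u² - 3u + 1` are excluded.
-/

open Finset Matrix

theorem card_filter_le_two_of_quadratic {R : Type*} [CommRing R] [IsDomain R] (s : Finset R)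
    (P : R → Prop) [DecidablePred P] (b c : R) (hP : ∀ x, P x → x ^ 2 + b * x + c = 0) :
    #{x ∈ s | P x} ≤ 2 := by
  by_contra! h
  obtain ⟨x, hx, y, hy, z, hz, hxy, hxz, hyz⟩ := two_lt_card.mp h
  simp only [mem_filter] at hx hy hz
  have sum_eq {u v : R} (hu : P u) (hv : P v) (huv : u ≠ v) : u + v + b = 0 := by
    have : (u - v) * (u + v + b) = 0 := by linear_combination hP u hu - hP v hv
    exact (mul_eq_zero.mp this).resolve_left (sub_ne_zero.mpr huv)
  exact hyz (by linear_combination sum_eq hx.2 hy.2 hxy - sum_eq hx.2 hz.2 hxz)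

theorem card_filter_le_card_filter_and_ne_add_one {α : Type*} [DecidableEq α] (s : Finset α)
    (P : α → Prop) [DecidablePred P] (a : α) :
    #{x ∈ s | P x} ≤ #{x ∈ s | P x ∧ x ≠ a} + 1 := by
  have : ({x ∈ s | P x ∧ x ≠ a} : Finset α) = ({x ∈ s | P x} : Finset α).erase a := by
    ext; simp only [mem_filter, mem_erase]; tauto
  rw [this]
  have := pred_card_le_card_erase (s := ({x ∈ s | P x} : Finset α)) (a := a)
  omega

theorem Units.ncard_setOf_val {M : Type*} [Monoid M] (P : M → Prop)
    (hP : ∀ m, P m → IsUnit m) :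
    {u : Mˣ | P u}.ncard = {m : M | P m}.ncard :=
  Set.ncard_preimage_of_injective_subset_range Units.val_injective fun m hm => hP m hm

section FiniteField

variable {F : Type*} [Field F] [Fintype F] [DecidableEq F]

local notation "q" => Fintype.card F

theorem card_filter_sq_eq_le_two (v : F) : #{t : F | t ^ 2 = v} ≤ 2 :=
  card_filter_le_two_of_quadratic _ _ 0 (-v) fun t ht => by linear_combination ht

theorem card_mul_eq_add_one (m : F) :
    #{p : F × F | p.1 * p.2 = m} + 1 = q + if m = 0 then q else 0 := by
  have fibre (a : F) : #{b : F | a * b = m} = if a = 0 then (if m = 0 then q else 0) else 1 := by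
    split_ifs with ha hm
    · simp [ha, hm]
    · simp [ha, Ne.symm hm]
    · rw [card_eq_one]
      exact ⟨a⁻¹ * m, by ext b; simp [eq_inv_mul_iff_mul_eq₀ ha]⟩
  have nonzero : ∑ a ∈ {0}ᶜ, #{b : F | a * b = m} = q - 1 := by
    rw [sum_congr rfl fun a ha => (fibre a).trans (if_neg (by simpa using ha)), sum_const,
      card_compl, card_singleton, smul_eq_mul, mul_one]
  rw [card_filter, Fintype.sum_prod_type]
  simp only [← card_filter]
  rw [Fintype.sum_eq_add_sum_compl 0, nonzero, fibre, if_pos rfl]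
  have := Fintype.card_pos (α := F)
  omega

theorem card_trace_det_eq_sum (t d : F) :
    #{M : Matrix (Fin 2) (Fin 2) F | M.trace = t ∧ M.det = d} =
      ∑ a : F, #{p : F × F | p.1 * p.2 = a * (t - a) - d} := by
  have triples : ∑ a : F, #{p : F × F | p.1 * p.2 = a * (t - a) - d} =
      #{x : F × F × F | x.2.1 * x.2.2 = x.1 * (t - x.1) - d} := by
    simp only [card_filter, Fintype.sum_prod_type]
  rw [triples]
  refine card_nbij' (fun M => (M 0 0, M 0 1, M 1 0)) (fun x => !![x.1, x.2.1; x.2.2, t - x.1])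
    ?_ ?_ ?_ ?_
  · intro M hM
    simp only [coe_filter, mem_univ, true_and, Set.mem_ofPred_eq, trace_fin_two,
      det_fin_two] at hM ⊢
    linear_combination hM.1 * M 0 0 - hM.2
  · intro x hx
    simp only [coe_filter, mem_univ, true_and, Set.mem_ofPred_eq, trace_fin_two, det_fin_two,
      of_apply, cons_val', cons_val_zero, cons_val_fin_one, cons_val_one, add_sub_cancel] at hx ⊢
    linear_combination -hx
  · intro M hM
    simp only [coe_filter, mem_univ, true_and, Set.mem_ofPred_eq, trace_fin_two] at hM
    simp only [← hM.1, add_sub_cancel_left]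
    exact (eta_fin_two M).symm
  · intro x _
    simp

theorem card_trace_det_add_card (t d : F) :
    #{M : Matrix (Fin 2) (Fin 2) F | M.trace = t ∧ M.det = d} + q =
      q ^ 2 + #{a : F | a * (t - a) = d} * q :=
  calc _ = ∑ a : F, (#{p : F × F | p.1 * p.2 = a * (t - a) - d} + 1) := by
        rw [card_trace_det_eq_sum, sum_add_distrib, sum_const, card_univ, smul_eq_mul, mul_one]
    _ = ∑ a : F, (q + if a * (t - a) - d = 0 then q else 0) := by
        simp only [card_mul_eq_add_one]
    _ = _ := by
        rw [sum_add_distrib, ← sum_filter]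
        simp only [sub_eq_zero, sum_const, card_univ, smul_eq_mul, sq]

theorem abs_card_trace_det_sub_le (t d : F) :
    |(#{M : Matrix (Fin 2) (Fin 2) F | M.trace = t ∧ M.det = d} : ℝ) - q ^ 2| ≤ q := by
  have hcount : (#{M : Matrix (Fin 2) (Fin 2) F | M.trace = t ∧ M.det = d} : ℝ) + q =
      q ^ 2 + #{a : F | a * (t - a) = d} * q := by
    exact_mod_cast card_trace_det_add_card t d
  have hroots : (#{a : F | a * (t - a) = d} : ℝ) ≤ 2 := by
    exact_mod_cast card_filter_le_two_of_quadratic univ _ (-t) d fun a ha => by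
      linear_combination -ha
  have hq : (0 : ℝ) ≤ q := Nat.cast_nonneg _
  rw [abs_le]
  constructor <;> nlinarith [Nat.cast_nonneg (α := ℝ) #{a : F | a * (t - a) = d}]

theorem card_det_eq_trace_mem (d : F) (P : F → Prop) [DecidablePred P] :
    #{M : Matrix (Fin 2) (Fin 2) F | M.det = d ∧ P M.trace} =
      ∑ t ∈ {t : F | P t}, #{M : Matrix (Fin 2) (Fin 2) F | M.trace = t ∧ M.det = d} := by
  rw [card_eq_sum_card_fiberwise (f := trace) (t := {t : F | P t}) fun M hM => by
    simp only [coe_filter, mem_univ, true_and, Set.mem_ofPred_eq] at hM ⊢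
    exact hM.2]
  refine sum_congr rfl fun t ht => congrArg card (?_)
  rw [filter_filter]
  refine filter_congr fun M _ => ?_
  simp only [mem_filter, mem_univ, true_and] at ht
  constructor
  · rintro ⟨⟨hd, -⟩, rfl⟩; exact ⟨rfl, hd⟩
  · rintro ⟨rfl, hd⟩; exact ⟨⟨hd, ht⟩, rfl⟩

theorem abs_card_det_eq_trace_mem_sub_le (d : F) (P : F → Prop) [DecidablePred P] :
    |(#{M : Matrix (Fin 2) (Fin 2) F | M.det = d ∧ P M.trace} : ℝ) - #{t : F | P t} * q ^ 2| ≤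
      q ^ 2 :=
  calc _ = |∑ t ∈ {t : F | P t},
          ((#{M : Matrix (Fin 2) (Fin 2) F | M.trace = t ∧ M.det = d} : ℝ) - q ^ 2)| := by
        rw [card_det_eq_trace_mem, sum_sub_distrib, sum_const, nsmul_eq_mul]
        push_cast; rfl
    _ ≤ ∑ t ∈ {t : F | P t}, (q : ℝ) :=
        (abs_sum_le_sum_abs _ _).trans (sum_le_sum fun t _ => abs_card_trace_det_sub_le t d)
    _ ≤ q ^ 2 := by
        rw [sum_const, nsmul_eq_mul, sq]
        gcongr
        exact_mod_cast card_le_univ _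

theorem abs_ncard_det_eq_mem_sub_le {d : F} (hd : d ≠ 0) (P : F → Prop) [DecidablePred P]
    (S : Set (GL (Fin 2) F))
    (hS : ∀ A : GL (Fin 2) F, (A : Matrix (Fin 2) (Fin 2) F).det = d →
      (A ∈ S ↔ P (A : Matrix (Fin 2) (Fin 2) F).trace)) :
    |({A : GL (Fin 2) F | (A : Matrix (Fin 2) (Fin 2) F).det = d ∧ A ∈ S}.ncard : ℝ) -
        #{t : F | P t} * q ^ 2| ≤ q ^ 2 := by
  have hcount : {A : GL (Fin 2) F | (A : Matrix (Fin 2) (Fin 2) F).det = d ∧ A ∈ S}.ncard =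
      #{M : Matrix (Fin 2) (Fin 2) F | M.det = d ∧ P M.trace} :=
    calc _ = {A : GL (Fin 2) F | (A : Matrix (Fin 2) (Fin 2) F).det = d ∧
            P (A : Matrix (Fin 2) (Fin 2) F).trace}.ncard :=
          congrArg Set.ncard (Set.ext fun A => and_congr_right (hS A))
      _ = {M : Matrix (Fin 2) (Fin 2) F | M.det = d ∧ P M.trace}.ncard :=
          Units.ncard_setOf_val (fun M : Matrix (Fin 2) (Fin 2) F => M.det = d ∧ P M.trace)
            fun M hM => (isUnit_iff_isUnit_det M).mpr (hM.1 ▸ hd.isUnit)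
      _ = _ := by rw [← coe_filter_univ, Set.ncard_coe_finset]
  rw [hcount]
  exact abs_card_det_eq_trace_mem_sub_le d P

theorem card_ne_zero_sq_eq_sq (h2 : (2 : F) ≠ 0) {y₀ : F} (hy₀ : y₀ ≠ 0) :
    #{y : F | y ≠ 0 ∧ y₀ ^ 2 = y ^ 2} = 2 := by
  have : ({y : F | y ≠ 0 ∧ y₀ ^ 2 = y ^ 2} : Finset F) = {y₀, -y₀} := by
    ext y
    simp only [mem_filter, mem_univ, true_and, mem_insert, mem_singleton, eq_comm (a := y₀ ^ 2),
      sq_eq_sq_iff_eq_or_eq_neg]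
    constructor
    · exact And.right
    · rintro (rfl | rfl) <;> simpa
  rw [this, card_pair]
  intro h
  exact hy₀ ((mul_eq_zero.mp (by linear_combination h : (2 : F) * y₀ = 0)).resolve_left h2)

theorem two_mul_card_exists_sq_eq {α : Type*} [Fintype α] (h2 : (2 : F) ≠ 0) (f : α → F)
    [DecidablePred fun a => ∃ y : F, y ≠ 0 ∧ f a = y ^ 2] :
    2 * #{a : α | ∃ y : F, y ≠ 0 ∧ f a = y ^ 2} =
      #{p : α × F | p.2 ≠ 0 ∧ f p.1 = p.2 ^ 2} := by
  have fibre (a : α) : #{y : F | y ≠ 0 ∧ f a = y ^ 2} =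
      if ∃ y : F, y ≠ 0 ∧ f a = y ^ 2 then 2 else 0 := by
    split_ifs with h
    · obtain ⟨y₀, hy₀, hfa⟩ := h
      rw [hfa]; exact card_ne_zero_sq_eq_sq h2 hy₀
    · rw [card_eq_zero, filter_eq_empty_iff]
      exact fun y _ hy => h ⟨y, hy⟩
  rw [card_filter, card_filter, Fintype.sum_prod_type, mul_sum]
  simp only [← card_filter, fibre, mul_ite, mul_one, mul_zero]

theorem card_sq_sub_eq_sq_eq (h2 : (2 : F) ≠ 0) (c : F) :
    #{p : F × F | p.2 ≠ 0 ∧ p.1 ^ 2 - c = p.2 ^ 2} =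
      #{p : F × F | p.1 * p.2 = c ∧ p.1 ≠ p.2} := by
  refine card_nbij' (fun p => (p.1 - p.2, p.1 + p.2)) (fun p => ((p.1 + p.2) / 2, (p.2 - p.1) / 2))
    ?_ ?_ ?_ ?_
  all_goals intro p hp; simp only [coe_filter, mem_univ, true_and, Set.mem_ofPred_eq] at hp ⊢
  · refine ⟨by linear_combination hp.2, fun h => hp.1 ?_⟩
    exact (mul_eq_zero.mp (by linear_combination -h : (2 : F) * p.2 = 0)).resolve_left h2
  · refine ⟨fun h => hp.2 ?_, ?_⟩
    · field_simp at h
      linear_combination -h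
    · field_simp
      linear_combination 4 * hp.1
  · ext <;> field_simp <;> ring
  · ext <;> field_simp <;> ring

theorem card_mul_eq_and_ne_bounds {c : F} (hc : c ≠ 0) :
    q ≤ #{p : F × F | p.1 * p.2 = c ∧ p.1 ≠ p.2} + 3 ∧
      #{p : F × F | p.1 * p.2 = c ∧ p.1 ≠ p.2} + 1 ≤ q := by
  have hall := card_mul_eq_add_one c
  rw [if_neg hc, add_zero] at hall
  have hsplit := card_filter_add_card_filter_not (s := {p : F × F | p.1 * p.2 = c})
    (p := fun p => p.1 ≠ p.2)
  simp only [filter_filter, not_not] at hsplit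
  have hdiag : #{p : F × F | p.1 * p.2 = c ∧ p.1 = p.2} ≤ 2 :=
    calc _ ≤ #{u : F | u ^ 2 = c} :=
          card_le_card_of_injOn Prod.fst (fun p hp => by
            simp only [coe_filter, mem_univ, true_and, Set.mem_ofPred_eq] at hp ⊢
            rw [sq]; nth_rw 2 [hp.2]; exact hp.1)
            (fun p hp p' hp' h => by
              simp only [coe_filter, mem_univ, true_and, Set.mem_ofPred_eq] at hp hp'
              exact Prod.ext h (hp.2 ▸ hp'.2 ▸ h))
      _ ≤ 2 := card_filter_sq_eq_le_two c
  omega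

theorem card_exists_ne_zero_sq_bounds (h2 : (2 : F) ≠ 0) {c : F} (hc : c ≠ 0) :
    q ≤ 2 * #{t : F | ∃ y : F, y ≠ 0 ∧ t ^ 2 - c = y ^ 2} + 3 ∧
      2 * #{t : F | ∃ y : F, y ≠ 0 ∧ t ^ 2 - c = y ^ 2} + 1 ≤ q := by
  rw [two_mul_card_exists_sq_eq h2, card_sq_sub_eq_sq_eq h2]
  exact card_mul_eq_and_ne_bounds hc

theorem abs_card_traces_serreC1_sub_le (h2 : (2 : F) ≠ 0) {d : F} (hd : d ≠ 0) :
    |(#{t : F | (∃ y : F, y ≠ 0 ∧ t ^ 2 - 4 * d = y ^ 2) ∧ t ≠ 0} : ℝ) - q / 2| ≤ 5 / 2 := by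
  have h4 : (4 : F) ≠ 0 := by rw [show (4 : F) = 2 * 2 by norm_num]; exact mul_ne_zero h2 h2
  obtain ⟨hlow, hup⟩ := card_exists_ne_zero_sq_bounds h2 (mul_ne_zero h4 hd)
  have herase := card_filter_le_card_filter_and_ne_add_one univ
    (fun t : F => ∃ y : F, y ≠ 0 ∧ t ^ 2 - 4 * d = y ^ 2) 0
  have hsub : #{t : F | (∃ y : F, y ≠ 0 ∧ t ^ 2 - 4 * d = y ^ 2) ∧ t ≠ 0} ≤
      #{t : F | ∃ y : F, y ≠ 0 ∧ t ^ 2 - 4 * d = y ^ 2} :=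
    card_le_card (monotone_filter_right _ fun _ _ => And.left)
  rify at hlow hup herase hsub
  rw [abs_le]
  constructor <;> linarith

theorem abs_card_traces_serreC2_sub_le (h2 : (2 : F) ≠ 0) {d : F} (hd : d ≠ 0) :
    |(#{t : F | (¬∃ y : F, t ^ 2 - 4 * d = y ^ 2) ∧ t ≠ 0} : ℝ) - q / 2| ≤ 5 / 2 := by
  have h4 : (4 : F) ≠ 0 := by rw [show (4 : F) = 2 * 2 by norm_num]; exact mul_ne_zero h2 h2
  obtain ⟨hlow, hup⟩ := card_exists_ne_zero_sq_bounds h2 (mul_ne_zero h4 hd)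
  have herase := card_filter_le_card_filter_and_ne_add_one univ
    (fun t : F => ¬∃ y : F, t ^ 2 - 4 * d = y ^ 2) 0
  have hsub : #{t : F | (¬∃ y : F, t ^ 2 - 4 * d = y ^ 2) ∧ t ≠ 0} ≤
      #{t : F | ¬∃ y : F, t ^ 2 - 4 * d = y ^ 2} :=
    card_le_card (monotone_filter_right _ fun _ _ => And.left)
  have hcompl := card_filter_add_card_filter_not (s := univ)
    (fun t : F => ∃ y : F, t ^ 2 - 4 * d = y ^ 2)
  rw [card_univ] at hcompl
  have hne_zero_le : #{t : F | ∃ y : F, y ≠ 0 ∧ t ^ 2 - 4 * d = y ^ 2} ≤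
      #{t : F | ∃ y : F, t ^ 2 - 4 * d = y ^ 2} :=
    card_le_card (monotone_filter_right _ fun _ _ ⟨y, _, hy⟩ => ⟨y, hy⟩)
  have hle_ne_zero : #{t : F | ∃ y : F, t ^ 2 - 4 * d = y ^ 2} ≤
      #{t : F | ∃ y : F, y ≠ 0 ∧ t ^ 2 - 4 * d = y ^ 2} + 2 := by
    refine (card_le_card fun t ht => ?_).trans ((card_union_le _ _).trans
      (add_le_add_right (card_filter_sq_eq_le_two (4 * d)) _))
    obtain ⟨y, hy⟩ := (mem_filter.mp ht).2
    by_cases hy0 : y = 0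
    · refine mem_union_right _ (mem_filter.mpr ⟨mem_univ _, ?_⟩)
      rw [hy0] at hy
      linear_combination hy
    · exact mem_union_left _ (mem_filter.mpr ⟨mem_univ _, y, hy0, hy⟩)
  rify at hlow hup herase hsub hcompl hne_zero_le hle_ne_zero
  rw [abs_le]
  constructor <;> linarith

theorem card_filter_sq_mul_inv_mem_le {d : F} (hd : d ≠ 0) (U : Finset F) :
    #{t : F | t ^ 2 * d⁻¹ ∈ U} ≤ 2 * #U :=
  calc _ ≤ #(U.biUnion fun u => ({t : F | t ^ 2 = u * d} : Finset F)) :=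
        card_le_card fun t ht => mem_biUnion.mpr ⟨_, (mem_filter.mp ht).2,
          mem_filter.mpr ⟨mem_univ _, by field_simp⟩⟩
    _ ≤ ∑ u ∈ U, #{t : F | t ^ 2 = u * d} := card_biUnion_le
    _ ≤ ∑ _u ∈ U, 2 := sum_le_sum fun u _ => card_filter_sq_eq_le_two _
    _ = 2 * #U := by rw [sum_const, smul_eq_mul, mul_comm]

theorem abs_card_filter_sq_mul_inv_sub_le {d : F} (hd : d ≠ 0) (P : F → Prop) [DecidablePred P]
    (U : Finset F) (hU : ∀ u, ¬P u → u ∈ U) :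
    |(#{t : F | P (t ^ 2 * d⁻¹)} : ℝ) - q| ≤ 2 * #U := by
  have hbad : #{t : F | ¬P (t ^ 2 * d⁻¹)} ≤ 2 * #U :=
    (card_le_card (monotone_filter_right _ fun t _ => hU _)).trans
      (card_filter_sq_mul_inv_mem_le hd U)
  have hcompl := card_filter_add_card_filter_not (s := univ) fun t : F => P (t ^ 2 * d⁻¹)
  rw [card_univ] at hcompl
  rify at hbad hcompl
  rw [abs_le]
  constructor <;> linarith [(#{t : F | ¬P (t ^ 2 * d⁻¹)}).cast_nonneg (α := ℝ)]

theorem abs_card_traces_serreC3_sub_le {d : F} (hd : d ≠ 0) :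
    |(#{t : F | t ^ 2 * d⁻¹ ≠ 0 ∧ t ^ 2 * d⁻¹ ≠ 1 ∧ t ^ 2 * d⁻¹ ≠ 2 ∧ t ^ 2 * d⁻¹ ≠ 4 ∧
        (t ^ 2 * d⁻¹) ^ 2 - 3 * (t ^ 2 * d⁻¹) + 1 ≠ 0} : ℝ) - q| ≤ 12 := by
  set U : Finset F := {0, 1, 2, 4} ∪ ({u : F | u ^ 2 - 3 * u + 1 = 0} : Finset F)
  have hU : #U ≤ 6 := (card_union_le _ _).trans (add_le_add card_le_four
    (card_filter_le_two_of_quadratic _ _ (-3) 1 fun u hu => by linear_combination hu))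
  refine (abs_card_filter_sq_mul_inv_sub_le hd
    (fun u => u ≠ 0 ∧ u ≠ 1 ∧ u ≠ 2 ∧ u ≠ 4 ∧ u ^ 2 - 3 * u + 1 ≠ 0) U fun u hu => ?_).trans ?_
  · simp only [U, mem_union, mem_insert, mem_singleton, mem_filter, mem_univ, true_and]
    tauto
  · exact_mod_cast (by omega : 2 * #U ≤ 12)

end FiniteField

theorem abs_sub_le_of_approx {N T m q s : ℝ} (hq : 5 ≤ q) (hm : 0 ≤ m) (hmq : m ≤ q)
    (hN : |N - T * q ^ 2| ≤ q ^ 2) (hT : |T - m| ≤ 12) (hs : s = m * (q - 1) * (q + 1)) :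
    |N - s| ≤ 20 * (q * (q - 1) * (q + 1)) / q := by
  have hrhs : 20 * (q * (q - 1) * (q + 1)) / q = 20 * (q ^ 2 - 1) := by
    field_simp; ring
  have hq2 : 0 ≤ q ^ 2 := sq_nonneg q
  rw [hrhs, hs, abs_le]
  rw [abs_le] at hN hT
  constructor <;> nlinarith [mul_le_mul_of_nonneg_left hT.1 hq2, mul_le_mul_of_nonneg_left hT.2 hq2]

/-- Uniform counting of the sets `Cᵢ(ℓ)` on each determinant fibre of `GL₂(𝔽_ℓ)`:
with `s = |SL₂(𝔽_ℓ)| = ℓ(ℓ−1)(ℓ+1)`, the fibre over any `d ≠ 0` meets `C₁`, `C₂`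
in `s/2 + O(s/ℓ)` elements and `C₃` in `s + O(s/ℓ)` elements. -/
theorem stmt_17 :
    ∃ c : ℝ, 0 < c ∧ ∀ ℓ : ℕ, ℓ.Prime → 5 ≤ ℓ → ∀ d : ZMod ℓ, d ≠ 0 →
      (|(Set.ncard {A : Matrix.GeneralLinearGroup (Fin 2) (ZMod ℓ) |
            Matrix.det (A : Matrix (Fin 2) (Fin 2) (ZMod ℓ)) = d ∧ A ∈ serreC1 ℓ} : ℝ) -
          (ℓ : ℝ) * ((ℓ : ℝ) - 1) * ((ℓ : ℝ) + 1) / 2| ≤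
        c * ((ℓ : ℝ) * ((ℓ : ℝ) - 1) * ((ℓ : ℝ) + 1)) / (ℓ : ℝ)) ∧
      (|(Set.ncard {A : Matrix.GeneralLinearGroup (Fin 2) (ZMod ℓ) |
            Matrix.det (A : Matrix (Fin 2) (Fin 2) (ZMod ℓ)) = d ∧ A ∈ serreC2 ℓ} : ℝ) -
          (ℓ : ℝ) * ((ℓ : ℝ) - 1) * ((ℓ : ℝ) + 1) / 2| ≤
        c * ((ℓ : ℝ) * ((ℓ : ℝ) - 1) * ((ℓ : ℝ) + 1)) / (ℓ : ℝ)) ∧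
      (|(Set.ncard {A : Matrix.GeneralLinearGroup (Fin 2) (ZMod ℓ) |
            Matrix.det (A : Matrix (Fin 2) (Fin 2) (ZMod ℓ)) = d ∧ A ∈ serreC3 ℓ} : ℝ) -
          (ℓ : ℝ) * ((ℓ : ℝ) - 1) * ((ℓ : ℝ) + 1)| ≤
        c * ((ℓ : ℝ) * ((ℓ : ℝ) - 1) * ((ℓ : ℝ) + 1)) / (ℓ : ℝ)) := by
  refine ⟨20, by norm_num, fun ℓ hℓ h5 d hd => ?_⟩
  have : Fact ℓ.Prime := ⟨hℓ⟩
  have h2 : (2 : ZMod ℓ) ≠ 0 := Ring.two_ne_zero (by rw [ZMod.ringChar_zmod_n]; omega)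
  have hcard : (Fintype.card (ZMod ℓ) : ℝ) = ℓ := by rw [ZMod.card]
  have hℓ5 : (5 : ℝ) ≤ ℓ := by exact_mod_cast h5
  rw [← hcard] at hℓ5 ⊢
  refine ⟨?_, ?_, ?_⟩
  · exact abs_sub_le_of_approx hℓ5 (by positivity) (by linarith)
      (abs_ncard_det_eq_mem_sub_le hd _ _ fun A hA => by rw [serreC1, Set.mem_ofPred_eq, hA])
      ((abs_card_traces_serreC1_sub_le h2 hd).trans (by norm_num)) (by ring)
  · exact abs_sub_le_of_approx hℓ5 (by positivity) (by linarith)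
      (abs_ncard_det_eq_mem_sub_le hd _ _ fun A hA => by rw [serreC2, Set.mem_ofPred_eq, hA])
      ((abs_card_traces_serreC2_sub_le h2 hd).trans (by norm_num)) (by ring)
  · exact abs_sub_le_of_approx hℓ5 (by positivity) le_rfl
      (abs_ncard_det_eq_mem_sub_le hd _ _ fun A hA => by rw [serreC3, Set.mem_ofPred_eq, hA])
      (abs_card_traces_serreC3_sub_le hd) (by ring)
end
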